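/- arXiv:2602.09811 — 6 statements merged into one kernel-verified Lean document; each statement's English description precedes it below -/
import Mathlib

section
/- Every finite vertex-transitive connected d-regular graph with d ≥ 4 is 4-connected. -/
open SimpleGraph Set

namespace VTpaper

/-- Automorphism group acts transitively on vertices. -/
def VertexTransitive {V : Type*} (G : SimpleGraph V) : Prop :=
  ∀ u v : V, ∃ φ : G ≃g G, φ u = v

/-- Automorphism group acts transitively on ordered pairs of adjacent vertices. -/
def ArcTransitive {V : Type*} (G : SimpleGraph V) : Prop :=
  ∀ u₁ v₁ u₂ v₂ : V, G.Adj u₁ v₁ → G.Adj u₂ v₂ →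
    ∃ φ : G ≃g G, φ u₁ = u₂ ∧ φ v₁ = v₂

/-- Automorphism group acts transitively on edges. -/
def EdgeTransitive {V : Type*} (G : SimpleGraph V) : Prop :=
  ∀ e f : Sym2 V, e ∈ G.edgeSet → f ∈ G.edgeSet →
    ∃ φ : G ≃g G, e.map φ = f

/-- `G` is `d`-regular. -/
def Regular {V : Type*} (G : SimpleGraph V) (d : ℕ) : Prop :=
  ∀ v : V, (G.neighborSet v).ncard = d

/-- `G` is `k`-connected: more than `k` vertices, and deleting fewer than `k`
vertices leaves a connected graph. -/
def KConnected {V : Type*} (k : ℕ) (G : SimpleGraph V) : Prop :=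
  k < Nat.card V ∧ ∀ S : Set V, S.Finite → S.ncard < k → (G.induce Sᶜ).Connected

/-- A (vertex) separation of order `k`. -/
def IsSep {V : Type*} (G : SimpleGraph V) (k : ℕ) (A B : Set V) : Prop :=
  A ∪ B = Set.univ ∧ (A \ B).Nonempty ∧ (B \ A).Nonempty ∧
    (∀ a ∈ A \ B, ∀ b ∈ B \ A, ¬ G.Adj a b) ∧ (A ∩ B).ncard = k

/-- A side induces a claw `K_{1,3}`. -/
def InducesClaw {V : Type*} (G : SimpleGraph V) (A : Set V) : Prop :=
  Nonempty (G.induce A ≃g completeBipartiteGraph (Fin 1) (Fin 3))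

/-- Internally 4-connected: 3-connected and every 3-separation has a side inducing a claw. -/
def InternallyFourConnected {V : Type*} (G : SimpleGraph V) : Prop :=
  KConnected 3 G ∧ ∀ A B : Set V, IsSep G 3 A B → InducesClaw G A ∨ InducesClaw G B

/-- Quasi-4-connected: 3-connected and every 3-separation has a side with one interior vertex. -/
def QuasiFourConnected {V : Type*} (G : SimpleGraph V) : Prop :=
  KConnected 3 G ∧ ∀ A B : Set V, IsSep G 3 A B → (A \ B).ncard = 1 ∨ (B \ A).ncard = 1

/-- 2-quasi-5-connected. -/
def TwoQuasiFiveConnected {V : Type*} (G : SimpleGraph V) : Prop :=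
  QuasiFourConnected G ∧
    ∀ A B : Set V, IsSep G 4 A B → (A \ B).ncard ≤ 2 ∨ (B \ A).ncard ≤ 2

/-- The set of edges of `G` crossing from `A` to `B`. -/
def cutEdges {V : Type*} (G : SimpleGraph V) (A B : Set V) : Set (Sym2 V) :=
  {e | ∃ a b, a ∈ A ∧ b ∈ B ∧ G.Adj a b ∧ e = s(a, b)}

/-- An edge-cut: a bipartition of the vertex set with both sides nonempty. -/
def IsEdgeCut {V : Type*} (G : SimpleGraph V) (A B : Set V) : Prop :=
  A ∪ B = Set.univ ∧ Disjoint A B ∧ A.Nonempty ∧ B.Nonempty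

/-- A set of edges forms a matching (pairwise vertex-disjoint). -/
def IsMatchingSet {V : Type*} (S : Set (Sym2 V)) : Prop :=
  S.Pairwise fun e f => ∀ v : V, ¬ (v ∈ e ∧ v ∈ f)

/-- A tetra-cut: a 4-edge-cut whose cut edges form a matching. -/
def IsTetraCut {V : Type*} (G : SimpleGraph V) (A B : Set V) : Prop :=
  IsEdgeCut G A B ∧ (cutEdges G A B).ncard = 4 ∧ IsMatchingSet (cutEdges G A B)

/-- Two edge-cuts are nested: a side of one is contained in a side of the other. -/
def NestedCut {V : Type*} (A B C D : Set V) : Prop :=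
  A ⊆ C ∨ A ⊆ D ∨ B ⊆ C ∨ B ⊆ D

/-- `G` (on `V'`) is a `K_r`-expansion of `H` (on `V`) along the projection `f`. -/
def IsKrExpansionAlong {V V' : Type*} (H : SimpleGraph V) (G : SimpleGraph V')
    (r : ℕ) (f : V' → V) : Prop :=
  Function.Surjective f ∧
  (∀ v : V, (f ⁻¹' {v}).ncard = r) ∧
  (∀ x y : V', x ≠ y → f x = f y → G.Adj x y) ∧
  (∀ x y : V', G.Adj x y → f x ≠ f y → H.Adj (f x) (f y)) ∧
  (∀ x : V', ∃! y : V', G.Adj x y ∧ f x ≠ f y) ∧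
  (∀ u v : V, H.Adj u v → ∃! p : V' × V', f p.1 = u ∧ f p.2 = v ∧ G.Adj p.1 p.2)

def IsKrExpansion {V V' : Type*} (H : SimpleGraph V) (G : SimpleGraph V') (r : ℕ) : Prop :=
  ∃ f : V' → V, IsKrExpansionAlong H G r f

/-- `G` is a clique-expansion of `H` along `f`: the fibre over `v` is a clique of
size `deg v`, and the cross edges form a perfect matching, one per edge of `H`. -/
def IsCliqueExpansionAlong {V V' : Type*} (H : SimpleGraph V) (G : SimpleGraph V')
    (f : V' → V) : Prop :=
  (∀ v : V, (f ⁻¹' {v}).ncard = (H.neighborSet v).ncard) ∧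
  (∀ x y : V', x ≠ y → f x = f y → G.Adj x y) ∧
  (∀ x y : V', G.Adj x y → f x ≠ f y → H.Adj (f x) (f y)) ∧
  (∀ x : V', ∃! y : V', G.Adj x y ∧ f x ≠ f y) ∧
  (∀ u v : V, H.Adj u v → ∃! p : V' × V', f p.1 = u ∧ f p.2 = v ∧ G.Adj p.1 p.2)

/-- `G` is a `C_k`-expansion of `H` along `f`: each fibre induces a `k`-cycle,
and the cross edges form a perfect matching, one per edge of `H`. -/
def IsCycleExpansionAlong {V V' : Type*} (H : SimpleGraph V) (G : SimpleGraph V')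
    (k : ℕ) (f : V' → V) : Prop :=
  Function.Surjective f ∧
  (∀ v : V, Nonempty ((G.induce (f ⁻¹' {v})) ≃g SimpleGraph.cycleGraph k)) ∧
  (∀ x y : V', G.Adj x y → f x ≠ f y → H.Adj (f x) (f y)) ∧
  (∀ x : V', ∃! y : V', G.Adj x y ∧ f x ≠ f y) ∧
  (∀ u v : V, H.Adj u v → ∃! p : V' × V', f p.1 = u ∧ f p.2 = v ∧ G.Adj p.1 p.2)

/-- The line graph of `G`, on the vertex set `G.edgeSet`. -/
def LineGraph {V : Type*} (G : SimpleGraph V) : SimpleGraph G.edgeSet where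
  Adj e f := e ≠ f ∧ ∃ v : V, v ∈ e.1 ∧ v ∈ f.1
  symm := by
    constructor
    rintro e f ⟨hne, v, hv1, hv2⟩
    exact ⟨hne.symm, v, hv2, hv1⟩
  loopless := ⟨fun e h => h.1 rfl⟩

/-- The set of edges of `G` incident with `v`, as vertices of the line graph. -/
def incEdges {V : Type*} (G : SimpleGraph V) (v : V) : Set G.edgeSet :=
  {e | v ∈ e.1}

/-- A triangle in a graph, as a set of vertices. -/
def IsTriangle {α : Type*} (L : SimpleGraph α) (T : Set α) : Prop :=
  T.ncard = 3 ∧ L.IsClique T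

/-- The quotient of `G` by a partition `P` of its vertex set. -/
def quotGraph {V : Type*} (G : SimpleGraph V) (P : Set (Set V)) : SimpleGraph P where
  Adj s t := s ≠ t ∧ ∃ x ∈ (s : Set V), ∃ y ∈ (t : Set V), G.Adj x y
  symm := by
    constructor
    rintro s t ⟨h, x, hx, y, hy, hxy⟩
    exact ⟨h.symm, y, hy, x, hx, hxy.symm⟩
  loopless := ⟨fun s h => h.1 rfl⟩

/-- The separator edges of a mixed-separation `(A,B)`: edges between `A∖B` and `B∖A`. -/
def sepEdges {V : Type*} (G : SimpleGraph V) (A B : Set V) : Set (Sym2 V) :=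
  {e | ∃ a b, a ∈ A \ B ∧ b ∈ B \ A ∧ G.Adj a b ∧ e = s(a, b)}

/-- A mixed-separation. -/
def IsMixedSep {V : Type*} (G : SimpleGraph V) (A B : Set V) : Prop :=
  A ∪ B = Set.univ ∧ (A \ B).Nonempty ∧ (B \ A).Nonempty

/-- Order of a mixed-separation: separator vertices plus separator edges. -/
noncomputable def mixedOrder {V : Type*} (G : SimpleGraph V) (A B : Set V) : ℕ :=
  (A ∩ B).ncard + (sepEdges G A B).ncard

/-- Matching-condition: the separator edges form a matching and avoid separator vertices. -/
def MatchingCond {V : Type*} (G : SimpleGraph V) (A B : Set V) : Prop :=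
  IsMatchingSet (sepEdges G A B) ∧ ∀ e ∈ sepEdges G A B, ∀ v ∈ A ∩ B, v ∉ e

/-- Degree-condition: every separator vertex has at least two neighbours in each open side. -/
def DegreeCond {V : Type*} (G : SimpleGraph V) (A B : Set V) : Prop :=
  ∀ v ∈ A ∩ B, 2 ≤ (G.neighborSet v ∩ (A \ B)).ncard ∧
    2 ≤ (G.neighborSet v ∩ (B \ A)).ncard

/-- A tetra-separation: a mixed-4-separation satisfying the matching- and degree-conditions. -/
def IsTetraSep {V : Type*} (G : SimpleGraph V) (A B : Set V) : Prop :=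
  IsMixedSep G A B ∧ mixedOrder G A B = 4 ∧ MatchingCond G A B ∧ DegreeCond G A B

/-- Two mixed-separations are nested. -/
def NestedSep {V : Type*} (A B C D : Set V) : Prop :=
  (A ⊆ C ∧ D ⊆ B) ∨ (A ⊆ D ∧ C ⊆ B) ∨ (C ⊆ A ∧ B ⊆ D) ∨ (D ⊆ A ∧ B ⊆ C)

/-- A totally-nested tetra-separation. -/
def TotallyNestedTetraSep {V : Type*} (G : SimpleGraph V) (A B : Set V) : Prop :=
  IsTetraSep G A B ∧ ∀ C D : Set V, IsTetraSep G C D → NestedSep A B C D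

/-- A side induces a `K₄`. -/
def InducesK4 {V : Type*} (G : SimpleGraph V) (A : Set V) : Prop :=
  A.ncard = 4 ∧ G.IsClique A

/-- Essentially 5-connected. -/
def EssentiallyFiveConnected {V : Type*} (G : SimpleGraph V) : Prop :=
  KConnected 4 G ∧ ∀ A B : Set V, IsTetraSep G A B →
    A ∩ B = ∅ ∧ (InducesK4 G A ∨ InducesK4 G B)

/-- Quasi-5-connected: 4-connected with no tetra-separation. -/
def QuasiFiveConnected {V : Type*} (G : SimpleGraph V) : Prop :=
  KConnected 4 G ∧ ∀ A B : Set V, ¬ IsTetraSep G A B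

/-- The square of a cycle, `C_ℓ²`, on `ZMod ℓ`. -/
def cycleSq (ℓ : ℕ) : SimpleGraph (ZMod ℓ) where
  Adj i j := i ≠ j ∧ (j = i + 1 ∨ i = j + 1 ∨ j = i + 2 ∨ i = j + 2)
  symm := by
    constructor
    rintro i j ⟨h, h2⟩
    exact ⟨h.symm, by tauto⟩
  loopless := ⟨fun i h => h.1 rfl⟩

/-- A cycle-decomposition of `G` witnessing that it is a cycle of triangle-bags of length `ℓ`. -/
def IsCycleOfTriangleBags {V : Type*} (G : SimpleGraph V) (ℓ : ℕ) : Prop :=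
  ∃ B : ZMod ℓ → Set V,
    (⋃ i, B i) = Set.univ ∧
    (∀ i, (B i).ncard = 3 ∧ G.IsClique (B i)) ∧
    (∀ x y : V, G.Adj x y → ∃ i, x ∈ B i ∧ y ∈ B i) ∧
    (∀ i, (B i ∩ B (i + 1)).ncard = 2) ∧
    (∀ i j, i ≠ j → i ≠ j + 1 → j ≠ i + 1 →
      (B i ∩ B (i + 1)) ∩ (B j ∩ B (j + 1)) = ∅) ∧
    (∀ v i j, v ∈ B i → v ∈ B j → i ≠ j → v ∈ B (i + 1) ∨ v ∈ B (j + 1))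

/-- The 3-dimensional hypercube graph `Q₃`. -/
def cubeGraph : SimpleGraph (Fin 3 → Bool) where
  Adj x y := ∃! i, x i ≠ y i
  symm := by
    constructor
    rintro x y ⟨i, hi, hu⟩
    exact ⟨i, hi.symm, fun j hj => hu j hj.symm⟩
  loopless := by
    constructor
    rintro x ⟨i, hi, -⟩
    exact hi rfl

/-- The graph on arcs of `G` from Observation: vertices are ordered adjacent pairs. -/
def arcGraph {V : Type*} (G : SimpleGraph V) : SimpleGraph {p : V × V // G.Adj p.1 p.2} where
  Adj x y := x ≠ y ∧ ((x.1.1 = y.1.2 ∧ x.1.2 = y.1.1) ∨ x.1.1 = y.1.1)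
  symm := by
    constructor
    rintro x y ⟨h, h2 | h3⟩
    · exact ⟨h.symm, Or.inl ⟨h2.2.symm, h2.1.symm⟩⟩
    · exact ⟨h.symm, Or.inr h3.symm⟩
  loopless := ⟨fun x h => h.1 rfl⟩

end VTpaper

set_option linter.unusedSectionVars false

namespace VTaux
open SimpleGraph Set

variable {V : Type*} [Fintype V] {G : SimpleGraph V}

/-- external neighborhood -/
def nbr (G : SimpleGraph V) (A : Set V) : Set V := {v | v ∉ A ∧ ∃ a ∈ A, G.Adj a v}

lemma nbr_disj (A : Set V) : ∀ v ∈ nbr G A, v ∉ A := fun _ h => h.1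

lemma closure {A : Set V} {a v : V} (ha : a ∈ A) (h : G.Adj a v) : v ∈ A ∪ nbr G A := by
  by_cases hv : v ∈ A
  · exact Or.inl hv
  · exact Or.inr ⟨hv, a, ha, h⟩

lemma closure_rest {A : Set V} {a v : V} (ha : a ∈ (A ∪ nbr G A)ᶜ) (h : G.Adj a v) :
    v ∈ (A ∪ nbr G A)ᶜ ∪ nbr G A := by
  by_cases hv : v ∈ (A ∪ nbr G A)ᶜ
  · exact Or.inl hv
  · right
    rcases not_not.mp (fun hc => hv hc) with hv' | hv'
    · exact absurd (closure hv' h.symm) ha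
    · exact hv'

/-- a "configuration": nonempty set with nonempty "far side" -/
def Cfg (G : SimpleGraph V) (A : Set V) : Prop := A.Nonempty ∧ ((A ∪ nbr G A)ᶜ).Nonempty

noncomputable def kap (G : SimpleGraph V) : ℕ := sInf {n | ∃ A, Cfg G A ∧ (nbr G A).ncard = n}

def Frag (G : SimpleGraph V) (A : Set V) : Prop := Cfg G A ∧ (nbr G A).ncard = kap G

noncomputable def atomSize (G : SimpleGraph V) : ℕ := sInf {m | ∃ A, Frag G A ∧ A.ncard = m}

def Atom (G : SimpleGraph V) (A : Set V) : Prop := Frag G A ∧ A.ncard = atomSize G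

lemma kap_le {A : Set V} (h : Cfg G A) : kap G ≤ (nbr G A).ncard :=
  Nat.sInf_le ⟨A, h, rfl⟩

lemma frag_exists (h : ∃ A, Cfg G A) : ∃ A, Frag G A := by
  obtain ⟨A, hA⟩ := h
  obtain ⟨B, hB, hBc⟩ := Nat.sInf_mem (s := {n | ∃ A, Cfg G A ∧ (nbr G A).ncard = n}) ⟨_, A, hA, rfl⟩
  exact ⟨B, hB, hBc⟩

lemma atomSize_le {A : Set V} (h : Frag G A) : atomSize G ≤ A.ncard :=
  Nat.sInf_le ⟨A, h, rfl⟩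

lemma atom_exists (h : ∃ A, Cfg G A) : ∃ A, Atom G A := by
  obtain ⟨A, hA⟩ := frag_exists h
  obtain ⟨B, hB, hBc⟩ := Nat.sInf_mem (s := {m | ∃ A, Frag G A ∧ A.ncard = m}) ⟨_, A, hA, rfl⟩
  exact ⟨B, hB, hBc⟩

/-- strictness: a config smaller than the atom has strictly bigger boundary -/
lemma kap_lt {A : Set V} (h : Cfg G A) (hlt : A.ncard < atomSize G) :
    kap G + 1 ≤ (nbr G A).ncard := by
  rcases lt_or_eq_of_le (kap_le h) with h' | h'
  · omega
  · exact absurd (atomSize_le ⟨h, h'.symm⟩) (by omega)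

/-- the far side of a fragment is a fragment with the same boundary -/
lemma rest_frag {A : Set V} (h : Frag G A) :
    Frag G ((A ∪ nbr G A)ᶜ) ∧ nbr G ((A ∪ nbr G A)ᶜ) = nbr G A := by
  set S := nbr G A with hS
  set R := (A ∪ S)ᶜ with hR
  have hsub : nbr G R ⊆ S := by
    rintro v ⟨hv, a, ha, hadj⟩
    rcases closure_rest ha hadj with h' | h'
    · exact absurd h' hv
    · exact h'
  have hcfg : Cfg G R := by
    refine ⟨h.1.2, ?_⟩
    obtain ⟨a, ha⟩ := h.1.1
    refine ⟨a, ?_⟩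
    simp only [mem_compl_iff, mem_union]
    rintro (h' | h')
    · exact h' (mem_union_left _ ha)
    · exact (hsub h').1 ha
  have hk : kap G ≤ (nbr G R).ncard := kap_le hcfg
  have hle : (nbr G R).ncard ≤ S.ncard := ncard_le_ncard hsub (toFinite S)
  have hSk : S.ncard = kap G := h.2
  have heq : nbr G R = S := eq_of_subset_of_ncard_le hsub (by omega)
  exact ⟨⟨hcfg, by rw [heq, hSk]⟩, heq⟩

/-- tripartition counting: `S` is split by a set `B`, its boundary, and the rest -/
lemma tripart (S B : Set V) (T : Set V) (hdisj : ∀ v ∈ T, v ∉ B) :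
    S.ncard = (S ∩ B).ncard + (S ∩ T).ncard + (S ∩ (B ∪ T)ᶜ).ncard := by
  have h1 : S = (S ∩ B) ∪ ((S ∩ T) ∪ (S ∩ (B ∪ T)ᶜ)) := by
    ext v
    by_cases hv : v ∈ B <;> by_cases hv' : v ∈ T <;>
      simp [hv, hv', mem_union, mem_inter_iff, mem_compl_iff] <;> tauto
  have d1 : Disjoint (S ∩ T) (S ∩ (B ∪ T)ᶜ) := by
    rw [Set.disjoint_left]
    rintro v ⟨-, hv⟩ ⟨-, hv'⟩
    exact hv' (Or.inr hv)
  have d2 : Disjoint (S ∩ B) ((S ∩ T) ∪ (S ∩ (B ∪ T)ᶜ)) := by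
    rw [Set.disjoint_left]
    rintro v ⟨-, hv⟩ (⟨-, hv'⟩ | ⟨-, hv'⟩)
    · exact hdisj v hv' hv
    · exact hv' (Or.inl hv)
  conv_lhs => rw [h1]
  rw [ncard_union_eq d2, ncard_union_eq d1]
  ring

/-- corner boundary containment -/
lemma corner_subset {X SX Y SY : Set V}
    (hX : ∀ a ∈ X, ∀ v, G.Adj a v → v ∈ X ∪ SX)
    (hY : ∀ a ∈ Y, ∀ v, G.Adj a v → v ∈ Y ∪ SY) :
    nbr G (X ∩ Y) ⊆ (X ∩ SY) ∪ (SX ∩ Y) ∪ (SX ∩ SY) := by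
  rintro v ⟨hv, a, ⟨haX, haY⟩, hadj⟩
  rcases hX a haX v hadj with h1 | h1 <;> rcases hY a haY v hadj with h2 | h2
  · exact absurd ⟨h1, h2⟩ hv
  · exact Or.inl (Or.inl ⟨h1, h2⟩)
  · exact Or.inl (Or.inr ⟨h1, h2⟩)
  · exact Or.inr ⟨h1, h2⟩

/-- corner configuration bound -/
lemma corner_bound {X SX Y SY W : Set V}
    (hX : ∀ a ∈ X, ∀ v, G.Adj a v → v ∈ X ∪ SX)
    (hY : ∀ a ∈ Y, ∀ v, G.Adj a v → v ∈ Y ∪ SY)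
    (hne : (X ∩ Y).Nonempty) (hW : W.Nonempty) (hWX : ∀ w ∈ W, w ∉ X ∪ SX) :
    Cfg G (X ∩ Y) ∧
      (nbr G (X ∩ Y)).ncard ≤ (X ∩ SY).ncard + (SX ∩ Y).ncard + (SX ∩ SY).ncard := by
  have hsub := corner_subset hX hY
  have hcfg : Cfg G (X ∩ Y) := by
    refine ⟨hne, ?_⟩
    obtain ⟨w, hw⟩ := hW
    refine ⟨w, ?_⟩
    simp only [mem_compl_iff, mem_union]
    rintro (⟨h1, -⟩ | h1)
    · exact hWX w hw (Or.inl h1)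
    · rcases hsub h1 with (⟨h2, -⟩ | ⟨h2, -⟩) | ⟨h2, -⟩
      · exact hWX w hw (Or.inl h2)
      · exact hWX w hw (Or.inr h2)
      · exact hWX w hw (Or.inr h2)
  refine ⟨hcfg, ?_⟩
  calc (nbr G (X ∩ Y)).ncard ≤ ((X ∩ SY) ∪ (SX ∩ Y) ∪ (SX ∩ SY)).ncard :=
        ncard_le_ncard hsub (toFinite _)
    _ ≤ ((X ∩ SY) ∪ (SX ∩ Y)).ncard + (SX ∩ SY).ncard := ncard_union_le _ _
    _ ≤ (X ∩ SY).ncard + (SX ∩ Y).ncard + (SX ∩ SY).ncard := by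
        have := ncard_union_le (X ∩ SY) (SX ∩ Y)
        omega

/-- connectivity gives a nonempty boundary -/
lemma nbr_nonempty (hconn : G.Connected) {A : Set V} (hA : A.Nonempty)
    (hA' : ((A ∪ nbr G A)ᶜ).Nonempty) : (nbr G A).Nonempty := by
  by_contra hemp
  rw [not_nonempty_iff_eq_empty] at hemp
  obtain ⟨a, ha⟩ := hA
  obtain ⟨z, hz⟩ := hA'
  have hreach : ∀ {x y : V}, G.Walk x y → x ∈ A → y ∈ A := by
    intro x y w
    induction w with
    | nil => exact id
    | cons h p ih =>
      intro hx
      apply ih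
      rcases closure hx h with h' | h'
      · exact h'
      · rw [hemp] at h'; exact absurd h' (notMem_empty _)
    
  obtain ⟨w⟩ := hconn.preconnected a z
  have := hreach w ha
  rw [hemp] at hz
  simp only [union_empty, mem_compl_iff] at hz
  exact hz this

/-- image of the boundary under an automorphism -/
lemma nbr_image (φ : G ≃g G) (A : Set V) : nbr G (φ '' A) = φ '' nbr G A := by
  ext v
  constructor
  · rintro ⟨hv, a, ⟨a₀, ha₀, rfl⟩, hadj⟩
    refine ⟨φ.symm v, ⟨?_, a₀, ha₀, ?_⟩, by simp⟩
    · intro hc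
      exact hv ⟨φ.symm v, hc, by simp⟩
    · have : G.Adj (φ a₀) (φ (φ.symm v)) := by simpa using hadj
      exact φ.map_rel_iff.mp this
  · rintro ⟨v₀, ⟨hv₀, a₀, ha₀, hadj⟩, rfl⟩
    refine ⟨?_, φ a₀, ⟨a₀, ha₀, rfl⟩, φ.map_rel_iff.mpr hadj⟩
    rintro ⟨b, hb, hbe⟩
    exact hv₀ (by rwa [← φ.toEquiv.injective hbe])

lemma atom_image (φ : G ≃g G) {A : Set V} (h : Atom G A) : Atom G (φ '' A) := by
  have hinj : Function.Injective φ := φ.toEquiv.injective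
  have hbij : Function.Bijective φ := φ.toEquiv.bijective
  have hcfg : Cfg G (φ '' A) := by
    refine ⟨h.1.1.1.image φ, ?_⟩
    obtain ⟨z, hz⟩ := h.1.1.2
    refine ⟨φ z, ?_⟩
    rw [nbr_image, ← image_union, ← image_compl_eq hbij]
    exact ⟨z, hz, rfl⟩
  refine ⟨⟨hcfg, ?_⟩, ?_⟩
  · rw [nbr_image, ncard_image_of_injective _ hinj]; exact h.1.2
  · rw [ncard_image_of_injective _ hinj]; exact h.2

lemma step1 (hk3 : kap G ≤ 3) (ha2 : 2 ≤ atomSize G)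
    {A₁ B : Set V} (hA₁ : Frag G A₁) (hB : Atom G B)
    (hBS : (B ∩ nbr G A₁).Nonempty) : B ∩ A₁ = ∅ := by
  by_contra hne0
  rw [← Ne, ← nonempty_iff_ne_empty, inter_comm] at hne0
  -- hne0 : (A₁ ∩ B).Nonempty
  obtain ⟨s, hsB, hsS⟩ := hBS
  set S := nbr G A₁ with hSdef
  set R := (A₁ ∪ S)ᶜ with hRdef
  set T := nbr G B with hTdef
  set Q := (B ∪ T)ᶜ with hQdef
  obtain ⟨hRfrag, hRnbr⟩ := rest_frag hA₁
  obtain ⟨hQfrag, hQnbr⟩ := rest_frag hB.1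
  have clA : ∀ a ∈ A₁, ∀ v, G.Adj a v → v ∈ A₁ ∪ S := fun a ha v h => closure ha h
  have clB : ∀ a ∈ B, ∀ v, G.Adj a v → v ∈ B ∪ T := fun a ha v h => closure ha h
  have clR : ∀ a ∈ R, ∀ v, G.Adj a v → v ∈ R ∪ S := fun a ha v h => closure_rest ha h
  have clQ : ∀ a ∈ B ∪ Tᶜ.compl, True := fun _ _ => trivial
  have clQ' : ∀ a ∈ Q, ∀ v, G.Adj a v → v ∈ Q ∪ T := fun a ha v h => closure_rest ha h
  have hWR : ∀ w ∈ R, w ∉ A₁ ∪ S := fun w hw => hw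
  have hWA : ∀ w ∈ A₁, w ∉ R ∪ S := by
    intro w hw
    rintro (h | h)
    · exact h (Or.inl hw)
    · exact (nbr_disj A₁ w h) hw
  have hAne : A₁.Nonempty := hA₁.1.1
  have hRne : R.Nonempty := hA₁.1.2
  -- numbers
  have hScard : S.ncard = kap G := hA₁.2
  have hTcard : T.ncard = kap G := hB.1.2
  have hBcard : B.ncard = atomSize G := hB.2
  have hStri := tripart S B T (nbr_disj B)
  have hTtri := tripart T A₁ S (nbr_disj A₁)
  rw [← hQdef] at hStri
  rw [← hRdef] at hTtri
  have e1 : (A₁ ∩ T).ncard = (T ∩ A₁).ncard := by rw [inter_comm]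
  have e2 : (R ∩ T).ncard = (T ∩ R).ncard := by rw [inter_comm]
  have e3 : (S ∩ T).ncard = (T ∩ S).ncard := by rw [inter_comm]
  -- corner (1)
  have hc1 := corner_bound clA clB hne0 hRne hWR
  have hlt1 : (A₁ ∩ B).ncard < atomSize G := by
    rw [← hBcard]
    refine ncard_lt_ncard ⟨inter_subset_right, fun hsub => ?_⟩ (toFinite B)
    exact (nbr_disj A₁ s hsS) (hsub hsB).1
  have h1 : kap G + 1 ≤ (A₁ ∩ T).ncard + (S ∩ B).ncard + (S ∩ T).ncard :=
    le_trans (kap_lt hc1.1 hlt1) hc1.2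
  by_cases h4 : (R ∩ Q).Nonempty
  · have hc4 := corner_bound clR clQ' h4 hAne hWA
    have h4b : kap G ≤ (R ∩ T).ncard + (S ∩ Q).ncard + (S ∩ T).ncard :=
      le_trans (kap_le hc4.1) hc4.2
    omega
  · have h4e : ∀ v ∈ R, v ∉ Q := fun v hv hq => h4 ⟨v, hv, hq⟩
    by_cases h2 : (R ∩ B).Nonempty
    · have hc2 := corner_bound clR clB h2 hAne hWA
      have hlt2 : (R ∩ B).ncard < atomSize G := by
        rw [← hBcard]
        refine ncard_lt_ncard ⟨inter_subset_right, fun hsub => ?_⟩ (toFinite B)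
        obtain ⟨w, hwA, hwB⟩ := hne0
        exact (hsub hwB).1 (Or.inl hwA)
      have h2b : kap G + 1 ≤ (R ∩ T).ncard + (S ∩ B).ncard + (S ∩ T).ncard :=
        le_trans (kap_lt hc2.1 hlt2) hc2.2
      by_cases h3 : (A₁ ∩ Q).Nonempty
      · have hc3 := corner_bound clA clQ' h3 hRne hWR
        have h3b : kap G ≤ (A₁ ∩ T).ncard + (S ∩ Q).ncard + (S ∩ T).ncard :=
          le_trans (kap_le hc3.1) hc3.2
        omega
      · -- Q ⊆ S
        have hQS : S ∩ Q = Q := by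
          apply inter_eq_self_of_subset_right
          intro v hv
          by_cases hvA : v ∈ A₁
          · exact absurd ⟨v, hvA, hv⟩ h3
          · by_cases hvS : v ∈ S
            · exact hvS
            · exact absurd hv (h4e v (by simp [hRdef, hvA, hvS]))
        have hQa : atomSize G ≤ Q.ncard := atomSize_le hQfrag
        have hq : (S ∩ Q).ncard = Q.ncard := by rw [hQS]
        omega
    · -- R ⊆ T
      have hRT : T ∩ R = R := by
        apply inter_eq_self_of_subset_right
        intro v hv
        by_cases hvB : v ∈ B
        · exact absurd ⟨v, hv, hvB⟩ h2
        · by_cases hvT : v ∈ T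
          · exact hvT
          · exact absurd (by simp [hQdef, hvB, hvT] : v ∈ Q) (h4e v hv)
      have hRa : atomSize G ≤ R.ncard := atomSize_le hRfrag
      have hpB : (S ∩ B).ncard ≤ B.ncard := ncard_le_ncard inter_subset_right (toFinite B)
      rw [hRT] at hTtri
      omega

lemma main_contra {d : ℕ} (hd : 4 ≤ d) (hconn : G.Connected)
    (hvt : ∀ u v : V, ∃ φ : G ≃g G, φ u = v)
    (hreg : ∀ v : V, (G.neighborSet v).ncard = d)
    {C₀ : Set V} (hC₀ : Cfg G C₀) (h3 : (nbr G C₀).ncard ≤ 3) : False := by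
  have hk3 : kap G ≤ 3 := le_trans (kap_le hC₀) h3
  obtain ⟨A, hA⟩ := atom_exists ⟨C₀, hC₀⟩
  set S := nbr G A with hSdef
  set R := (A ∪ S)ᶜ with hRdef
  obtain ⟨hRfrag, hRnbr⟩ := rest_frag hA.1
  have hAne : A.Nonempty := hA.1.1.1
  -- degree bound : d + 1 ≤ atomSize + kap
  obtain ⟨v₀, hv₀⟩ := id hAne
  have hnsub : G.neighborSet v₀ ⊆ (A \ {v₀}) ∪ S := by
    intro w hw
    rw [SimpleGraph.mem_neighborSet] at hw
    rcases closure hv₀ hw with h' | h'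
    · exact Or.inl ⟨h', by rintro rfl; exact G.irrefl hw⟩
    · exact Or.inr h'
  have hdeg : d + 1 ≤ atomSize G + kap G := by
    have h1 : (G.neighborSet v₀).ncard ≤ ((A \ {v₀}) ∪ S).ncard :=
      ncard_le_ncard hnsub (toFinite _)
    have h2 : ((A \ {v₀}) ∪ S).ncard ≤ (A \ {v₀}).ncard + S.ncard := ncard_union_le _ _
    have h3' : (A \ {v₀}).ncard = A.ncard - 1 := ncard_diff_singleton_of_mem hv₀
    have h4 : 0 < A.ncard := (ncard_pos (toFinite _)).mpr hAne
    have h5 := hreg v₀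
    have h6 : S.ncard = kap G := hA.1.2
    have h7 : A.ncard = atomSize G := hA.2
    omega
  have ha2 : 2 ≤ atomSize G := by omega
  -- pick s in the boundary, move the atom onto it
  obtain ⟨s, hsS⟩ := nbr_nonempty hconn hA.1.1.1 hA.1.1.2
  obtain ⟨φ, hφ⟩ := hvt v₀ s
  set B := φ '' A with hBdef
  have hBatom : Atom G B := atom_image φ hA
  have hsB : s ∈ B := ⟨v₀, hv₀, hφ⟩
  have hBA : B ∩ A = ∅ := step1 hk3 ha2 hA.1 hBatom ⟨s, hsB, hsS⟩
  have hBR : B ∩ R = ∅ := step1 hk3 ha2 hRfrag hBatom (by rw [hRnbr]; exact ⟨s, hsB, hsS⟩)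
  have hBsubS : B ⊆ S := by
    intro v hv
    by_cases h1 : v ∈ A
    · exact absurd (⟨hv, h1⟩ : v ∈ B ∩ A) (eq_empty_iff_forall_notMem.mp hBA v)
    · by_cases h2 : v ∈ S
      · exact h2
      · exact absurd (⟨hv, by simp [hRdef, h1, h2]⟩ : v ∈ B ∩ R) (eq_empty_iff_forall_notMem.mp hBR v)
  set T := nbr G B with hTdef
  set Q := (B ∪ T)ᶜ with hQdef
  obtain ⟨hQfrag, hQnbr⟩ := rest_frag hBatom.1
  have hSA : ∀ v ∈ S, v ∉ A := nbr_disj A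
  have hTB : ∀ v ∈ T, v ∉ B := nbr_disj B
  -- T meets A
  obtain ⟨hsA, x, hxA, hxs⟩ := hsS
  have hxT : x ∈ T := ⟨fun hc => hSA x (hBsubS hc) hxA, s, hsB, hxs.symm⟩
  -- T meets R
  have hsR : s ∈ nbr G R := by rw [hRnbr]; exact ⟨hsA, x, hxA, hxs⟩
  obtain ⟨z₀, hz₀R, hz₀s⟩ : ∃ z ∈ R, G.Adj z s := by
    have hsR' : s ∈ nbr G R := hsR
    obtain ⟨-, z, hz, hadj⟩ := hsR'
    exact ⟨z, hz, hadj⟩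
  have hz₀T : z₀ ∈ T := ⟨fun hc => (hz₀R : z₀ ∈ R) (Or.inr (hBsubS hc)), s, hsB, hz₀s.symm⟩
  -- counting
  have hStri := tripart S B T (nbr_disj B)
  have hTtri := tripart T A S (nbr_disj A)
  rw [← hQdef] at hStri
  rw [← hRdef] at hTtri
  have hSB : (S ∩ B).ncard = B.ncard := by rw [inter_eq_self_of_subset_right hBsubS]
  have hTAne : 0 < (T ∩ A).ncard := (ncard_pos (toFinite _)).mpr ⟨x, hxT, hxA⟩
  have hTRne : 0 < (T ∩ R).ncard := (ncard_pos (toFinite _)).mpr ⟨z₀, hz₀T, hz₀R⟩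
  have hScard : S.ncard = kap G := hA.1.2
  have hTcard : T.ncard = kap G := hBatom.1.2
  have hBcard : B.ncard = atomSize G := hBatom.2
  have hAcard : A.ncard = atomSize G := hA.2
  have e3 : (S ∩ T).ncard = (T ∩ S).ncard := by rw [inter_comm]
  -- step 2 : A ⊆ T
  have clA : ∀ a ∈ A, ∀ v, G.Adj a v → v ∈ A ∪ S := fun a ha v h => closure ha h
  have clQ' : ∀ a ∈ Q, ∀ v, G.Adj a v → v ∈ Q ∪ T := fun a ha v h => closure_rest ha h
  have hWR : ∀ w ∈ R, w ∉ A ∪ S := fun w hw => hw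
  have hAsubT : A ⊆ T := by
    by_contra hc
    obtain ⟨w, hwA, hwT⟩ : ∃ w ∈ A, w ∉ T := not_subset.mp hc
    have hwQ : w ∈ Q := by
      simp only [hQdef, mem_compl_iff, mem_union]
      rintro (h' | h')
      · exact hSA w (hBsubS h') hwA
      · exact hwT h'
    have hAQ : (A ∩ Q).Nonempty := ⟨w, hwA, hwQ⟩
    have hc1 := corner_bound clA clQ' hAQ hA.1.1.2 hWR
    have hlt : (A ∩ Q).ncard < atomSize G := by
      rw [← hAcard]
      refine ncard_lt_ncard ⟨inter_subset_left, fun hsub => ?_⟩ (toFinite A)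
      exact (hsub hxA).2 (Or.inr hxT)
    have h1 : kap G + 1 ≤ (A ∩ T).ncard + (S ∩ Q).ncard + (S ∩ T).ncard :=
      le_trans (kap_lt hc1.1 hlt) hc1.2
    have e1 : (A ∩ T).ncard = (T ∩ A).ncard := by rw [inter_comm]
    omega
  have hTAeq : T ∩ A = A := inter_eq_self_of_subset_right hAsubT
  have hTA : (T ∩ A).ncard = atomSize G := by rw [hTAeq, hAcard]
  -- tight arithmetic
  have hq0 : (T ∩ S).ncard = 0 := by omega
  have hβ1 : (T ∩ R).ncard = 1 := by omega
  have hTSe : T ∩ S = ∅ := (ncard_eq_zero (toFinite _)).mp hq0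
  -- the final small separator
  have hnbrW : nbr G (A ∪ B) ⊆ (S \ B) ∪ (T ∩ R) := by
    rintro v ⟨hv, w, hw, hadj⟩
    rcases hw with hw | hw
    · rcases closure hw hadj with h' | h'
      · exact absurd (Or.inl h') hv
      · left
        exact ⟨h', fun hc => hv (Or.inr hc)⟩
    · rcases closure hw hadj with h' | h'
      · exact absurd (Or.inr h') hv
      · -- h' : v ∈ T
        right
        refine ⟨h', ?_⟩
        by_cases hvA : v ∈ A
        · exact absurd (Or.inl hvA) hv
        · by_cases hvS : v ∈ S
          · exact absurd (⟨h', hvS⟩ : v ∈ T ∩ S) (eq_empty_iff_forall_notMem.mp hTSe v)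
          · simp [hRdef, hvA, hvS]
  have hRa : 2 ≤ R.ncard := le_trans ha2 (atomSize_le hRfrag)
  have hzW : (R \ (T ∩ R)).Nonempty := by
    rw [← ncard_pos (toFinite _)]
    have : (R \ (T ∩ R)).ncard = R.ncard - (T ∩ R).ncard := ncard_diff inter_subset_right (toFinite _)
    omega
  obtain ⟨z, hzR, hzT⟩ := hzW
  have hcfgW : Cfg G (A ∪ B) := by
    refine ⟨hAne.mono subset_union_left, ⟨z, ?_⟩⟩
    simp only [mem_compl_iff, mem_union]
    rintro ((h' | h') | h')
    · exact (hzR : z ∈ R) (Or.inl h')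
    · exact (hzR : z ∈ R) (Or.inr (hBsubS h'))
    · rcases hnbrW h' with ⟨h'', -⟩ | h''
      · exact (hzR : z ∈ R) (Or.inr h'')
      · exact hzT h''
  have hfin : kap G ≤ (nbr G (A ∪ B)).ncard := kap_le hcfgW
  have hle2 : (nbr G (A ∪ B)).ncard ≤ (S \ B).ncard + (T ∩ R).ncard := by
    refine le_trans (ncard_le_ncard hnbrW (toFinite _)) (ncard_union_le _ _)
  have hSdB : (S \ B).ncard = S.ncard - B.ncard := ncard_diff hBsubS (toFinite _)
  omega

lemma extract {S : Set V} (hne : (Sᶜ : Set V).Nonempty) (hS : ¬ (G.induce Sᶜ).Connected) :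
    ∃ A : Set V, Cfg G A ∧ (nbr G A).ncard ≤ S.ncard := by
  rw [SimpleGraph.connected_iff] at hS
  push_neg at hS
  have hnty : Nonempty (Sᶜ : Set V) := hne.to_subtype
  have hpre : ¬ (G.induce Sᶜ).Preconnected := fun h => (not_isEmpty_iff.mpr hnty) (hS h)
  rw [SimpleGraph.Preconnected] at hpre
  push_neg at hpre
  obtain ⟨x, y, hxy⟩ := hpre
  set A : Set V := {v | ∃ hv : v ∈ Sᶜ, (G.induce Sᶜ).Reachable x ⟨v, hv⟩} with hAdef
  have hnbrS : nbr G A ⊆ S := by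
    rintro v ⟨hv, a, ⟨haS, hreach⟩, hadj⟩
    by_contra hvS
    have hvc : v ∈ Sᶜ := hvS
    apply hv
    refine ⟨hvc, hreach.trans ?_⟩
    exact SimpleGraph.Adj.reachable hadj
  have hxA : x.1 ∈ A := ⟨x.2, SimpleGraph.Reachable.refl _⟩
  have hyA : y.1 ∉ A := by
    rintro ⟨hy, hreach⟩
    exact hxy hreach
  refine ⟨A, ⟨⟨x.1, hxA⟩, ⟨y.1, ?_⟩⟩, ncard_le_ncard hnbrS (toFinite S)⟩
  simp only [mem_compl_iff, mem_union]
  rintro (h' | h')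
  · exact hyA h'
  · exact (y.2 : y.1 ∈ Sᶜ) (hnbrS h')

lemma card_lem {d : ℕ} (hd : 4 ≤ d) (hconn : G.Connected)
    (hreg : ∀ v : V, (G.neighborSet v).ncard = d) : 4 < Nat.card V := by
  have hne : Nonempty V := hconn.nonempty
  obtain ⟨v⟩ := hne
  have h1 : (insert v (G.neighborSet v)).ncard = d + 1 := by
    rw [ncard_insert_of_notMem (by simp) (toFinite _), hreg v]
  have h2 : (insert v (G.neighborSet v)).ncard ≤ (univ : Set V).ncard :=
    ncard_le_ncard (subset_univ _) (toFinite _)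
  rw [ncard_univ] at h2
  omega

end VTaux


open VTpaper in
/-- Every finite vertex-transitive connected d-regular graph with d ≥ 4
is 4-connected. -/
theorem stmt_0 {V : Type*} [Fintype V] (G : SimpleGraph V) (d : ℕ) (hd : 4 ≤ d)
    (hconn : G.Connected) (hvt : VertexTransitive G) (hreg : Regular G d) :
    KConnected 4 G := by
  refine ⟨VTaux.card_lem hd hconn hreg, ?_⟩
  intro S hSfin hScard
  by_contra hnc
  have hcard := VTaux.card_lem (G := G) hd hconn hreg
  have hcompl : (Sᶜ : Set V).Nonempty := by
    rw [← Set.ncard_pos (Set.toFinite _)]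
    have h := Set.ncard_add_ncard_compl S
    omega
  obtain ⟨A, hcfg, hle⟩ := VTaux.extract hcompl hnc
  exact VTaux.main_contra hd hconn hvt hreg hcfg (by omega)
end

section
/- Let G be an r-regular graph with r ≥ 3. Then the K_r-expansion of G is vertex-transitive if and only if G is arc-transitive. -/
open SimpleGraph Set

open VTpaper in
/-- For `r ≥ 3` and an `r`-regular graph `G`, the `K_r`-expansion of `G`
is vertex-transitive iff `G` is arc-transitive. -/
theorem stmt_3 {V V' : Type*} (G : SimpleGraph V) (G' : SimpleGraph V') (r : ℕ)
    (hr : 3 ≤ r) (hreg : Regular G r) (hexp : IsKrExpansion G G' r) :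
    VertexTransitive G' ↔ ArcTransitive G := by

  classical
  obtain ⟨f, hsurj, hfib, hclq, hcross, huniq, hpair⟩ := hexp
  choose cn hcn hcnu using huniq
  have hA : ∀ x : V', G'.Adj x (cn x) := fun x => (hcn x).1
  have hN : ∀ x : V', f x ≠ f (cn x) := fun x => (hcn x).2
  have hU : ∀ x z : V', G'.Adj x z → f x ≠ f z → z = cn x :=
    fun x z h1 h2 => hcnu x z ⟨h1, h2⟩
  have hcc : ∀ x : V', cn (cn x) = x :=
    fun x => (hU (cn x) x (hA x).symm (hN x).symm).symm
  have hGadj : ∀ x : V', G.Adj (f x) (f (cn x)) :=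
    fun x => hcross x (cn x) (hA x) (hN x)
  -- every triangle in G' lies in a single fibre
  have tri : ∀ a b c : V', G'.Adj a b → G'.Adj a c → G'.Adj b c → f a = f b := by
    intro a b c hab hac hbc
    by_contra hfab
    by_cases hfac : f a = f c
    · have hfbc : f b ≠ f c := fun h => hfab (hfac.trans h.symm)
      have h1 : a = cn b := hU b a hab.symm (fun h => hfab h.symm)
      have h2 : c = cn b := hU b c hbc hfbc
      exact hac.ne (h1.trans h2.symm)
    · have h1 : b = cn a := hU a b hab hfab
      have h2 : c = cn a := hU a c hac hfac
      exact hbc.ne (h1.trans h2.symm)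
  -- a fibre containing two distinct points contains a third
  have third : ∀ x y : V', f x = f y → x ≠ y → ∃ z, f z = f x ∧ z ≠ x ∧ z ≠ y := by
    intro x y hf hxy
    by_contra h
    push_neg at h
    have hsub : f ⁻¹' {f x} ⊆ {x, y} := by
      intro z hz
      simp only [Set.mem_preimage, Set.mem_singleton_iff] at hz
      by_cases hzx : z = x
      · exact Or.inl hzx
      · exact Or.inr (h z hz hzx)
    have h2 : (f ⁻¹' {f x}).ncard ≤ ({x, y} : Set V').ncard :=
      Set.ncard_le_ncard hsub (Set.toFinite _)
    rw [hfib, Set.ncard_pair hxy] at h2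
    omega
  -- automorphisms of G' preserve fibres
  have fibpres : ∀ (φ : G' ≃g G') (x y : V'), f x = f y → f (φ x) = f (φ y) := by
    intro φ x y hf
    by_cases hxy : x = y
    · rw [hxy]
    · obtain ⟨z, hz1, hz2, hz3⟩ := third x y hf hxy
      have haxy : G'.Adj x y := hclq x y hxy hf
      have haxz : G'.Adj x z := (hclq z x hz2 hz1).symm
      have hayz : G'.Adj y z := (hclq z y hz3 (hz1.trans hf)).symm
      exact tri (φ x) (φ y) (φ z) (φ.map_rel_iff.mpr haxy)
        (φ.map_rel_iff.mpr haxz) (φ.map_rel_iff.mpr hayz)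
  -- automorphisms of G' preserve cross edges
  have crosspres : ∀ (φ : G' ≃g G') (x y : V'), G'.Adj x y → f x ≠ f y →
      G'.Adj (φ x) (φ y) ∧ f (φ x) ≠ f (φ y) := by
    intro φ x y hadj hne
    refine ⟨φ.map_rel_iff.mpr hadj, fun h => hne ?_⟩
    have := fibpres φ.symm (φ x) (φ y) h
    simpa using this
  constructor
  · -- vertex-transitive expansion ⇒ arc-transitive base
    intro hVT u₁ v₁ u₂ v₂ h1 h2
    obtain ⟨s, hs⟩ := hsurj.hasRightInverse
    obtain ⟨p₁, ⟨hp₁u, hp₁v, hp₁a⟩, -⟩ := hpair u₁ v₁ h1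
    obtain ⟨p₂, ⟨hp₂u, hp₂v, hp₂a⟩, -⟩ := hpair u₂ v₂ h2
    obtain ⟨ψ, hψ⟩ := hVT p₁.1 p₂.1
    set Φ : V → V := fun v => f (ψ (s v)) with hΦdef
    set Φ' : V → V := fun v => f (ψ.symm (s v)) with hΦ'def
    have key : ∀ x : V', Φ (f x) = f (ψ x) := fun x => fibpres ψ (s (f x)) x (hs (f x))
    have key' : ∀ x : V', Φ' (f x) = f (ψ.symm x) :=
      fun x => fibpres ψ.symm (s (f x)) x (hs (f x))
    have linv : ∀ v, Φ' (Φ v) = v := by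
      intro v
      have : Φ' (f (ψ (s v))) = f (ψ.symm (ψ (s v))) := key' (ψ (s v))
      simpa [hΦdef, hs v] using this
    have rinv : ∀ v, Φ (Φ' v) = v := by
      intro v
      have : Φ (f (ψ.symm (s v))) = f (ψ (ψ.symm (s v))) := key (ψ.symm (s v))
      simpa [hΦ'def, hs v] using this
    have descadj : ∀ (θ : G' ≃g G') (u v : V), G.Adj u v →
        G.Adj (f (θ (s u))) (f (θ (s v))) := by
      intro θ u v huv
      obtain ⟨p, ⟨hpu, hpv, hpa⟩, -⟩ := hpair u v huv
      have hne : f p.1 ≠ f p.2 := by rw [hpu, hpv]; exact huv.ne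
      obtain ⟨hadj', hne'⟩ := crosspres θ p.1 p.2 hpa hne
      have e1 : f (θ (s u)) = f (θ p.1) := fibpres θ _ _ (by rw [hs, hpu])
      have e2 : f (θ (s v)) = f (θ p.2) := fibpres θ _ _ (by rw [hs, hpv])
      rw [e1, e2]
      exact hcross _ _ hadj' hne'
    have mri : ∀ a b : V, G.Adj (Φ a) (Φ b) ↔ G.Adj a b := by
      intro a b
      constructor
      · intro h
        have h2 : G.Adj (Φ' (Φ a)) (Φ' (Φ b)) := descadj ψ.symm (Φ a) (Φ b) h
        rwa [linv, linv] at h2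
      · intro h
        exact descadj ψ a b h
    refine ⟨⟨⟨Φ, Φ', linv, rinv⟩, mri _ _⟩, ?_, ?_⟩
    · show Φ u₁ = u₂
      rw [← hp₁u, key, hψ, hp₂u]
    · show Φ v₁ = v₂
      have hne₁ : f p₁.1 ≠ f p₁.2 := by rw [hp₁u, hp₁v]; exact h1.ne
      obtain ⟨hadj', hne'⟩ := crosspres ψ p₁.1 p₁.2 hp₁a hne₁
      rw [hψ] at hadj' hne'
      have e1 : ψ p₁.2 = cn p₂.1 := hU p₂.1 (ψ p₁.2) hadj' hne'
      have e2 : p₂.2 = cn p₂.1 := hU p₂.1 p₂.2 hp₂a (by rw [hp₂u, hp₂v]; exact h2.ne)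
      rw [← hp₁v, key, e1, ← e2, hp₂v]
  · -- arc-transitive base ⇒ vertex-transitive expansion
    intro hAT x₁ x₂
    obtain ⟨φ, hφ1, hφ2⟩ := hAT (f x₁) (f (cn x₁)) (f x₂) (f (cn x₂)) (hGadj x₁) (hGadj x₂)
    -- lift an automorphism of G to one of G'
    have Lfun : ∀ (θ : G ≃g G), ∃ L : V' → V', ∀ x : V',
        f (L x) = θ (f x) ∧ f (cn (L x)) = θ (f (cn x)) ∧
        ∀ z : V', f z = θ (f x) → f (cn z) = θ (f (cn x)) → L x = z := by
      intro θ
      have h : ∀ x : V', ∃ w : V', f w = θ (f x) ∧ f (cn w) = θ (f (cn x)) ∧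
          ∀ z : V', f z = θ (f x) → f (cn z) = θ (f (cn x)) → w = z := by
        intro x
        have hadj : G.Adj (θ (f x)) (θ (f (cn x))) := θ.map_rel_iff.mpr (hGadj x)
        obtain ⟨p, ⟨h1, h2, h3⟩, hu2⟩ := hpair (θ (f x)) (θ (f (cn x))) hadj
        have hnep : f p.1 ≠ f p.2 := by rw [h1, h2]; exact hadj.ne
        have hcnp : p.2 = cn p.1 := hU p.1 p.2 h3 hnep
        refine ⟨p.1, h1, by rw [← hcnp]; exact h2, ?_⟩
        intro z hz1 hz2
        have := hu2 (z, cn z) ⟨hz1, hz2, hA z⟩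
        exact (congrArg Prod.fst this).symm
      choose L hL using h
      exact ⟨L, hL⟩
    obtain ⟨L, hL⟩ := Lfun φ
    obtain ⟨L', hL'⟩ := Lfun φ.symm
    have linv : ∀ x : V', L' (L x) = x := by
      intro x
      exact (hL' (L x)).2.2 x (by rw [(hL x).1]; simp) (by rw [(hL x).2.1]; simp)
    have rinv : ∀ x : V', L (L' x) = x := by
      intro x
      exact (hL (L' x)).2.2 x (by rw [(hL' x).1]; simp) (by rw [(hL' x).2.1]; simp)
    -- generic: any map with the lift-spec is a graph homomorphism
    have inj : ∀ (θ : G ≃g G) (M : V' → V'),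
        (∀ x : V', f (M x) = θ (f x) ∧ f (cn (M x)) = θ (f (cn x)) ∧
          ∀ z : V', f z = θ (f x) → f (cn z) = θ (f (cn x)) → M x = z) →
        Function.Injective M := by
      intro θ M hM x y hxy
      have e1 : f x = f y := θ.injective (by rw [← (hM x).1, ← (hM y).1, hxy])
      have e2 : f (cn x) = f (cn y) := θ.injective (by rw [← (hM x).2.1, ← (hM y).2.1, hxy])
      obtain ⟨p, -, hu2⟩ := hpair (f x) (f (cn x)) (hGadj x)
      have a1 := hu2 (x, cn x) ⟨rfl, rfl, hA x⟩
      have a2 := hu2 (y, cn y) ⟨e1.symm, e2.symm, hA y⟩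
      have := a1.trans a2.symm
      exact congrArg Prod.fst this
    have cnpres : ∀ (θ : G ≃g G) (M : V' → V'),
        (∀ x : V', f (M x) = θ (f x) ∧ f (cn (M x)) = θ (f (cn x)) ∧
          ∀ z : V', f z = θ (f x) → f (cn z) = θ (f (cn x)) → M x = z) →
        ∀ x : V', M (cn x) = cn (M x) := by
      intro θ M hM x
      refine (hM (cn x)).2.2 (cn (M x)) (hM x).2.1 ?_
      rw [hcc, hcc, (hM x).1]
    have homgen : ∀ (θ : G ≃g G) (M : V' → V'),
        (∀ x : V', f (M x) = θ (f x) ∧ f (cn (M x)) = θ (f (cn x)) ∧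
          ∀ z : V', f z = θ (f x) → f (cn z) = θ (f (cn x)) → M x = z) →
        ∀ x y : V', G'.Adj x y → G'.Adj (M x) (M y) := by
      intro θ M hM x y hxy
      by_cases hf : f x = f y
      · refine hclq (M x) (M y) (fun h => hxy.ne (inj θ M hM h)) ?_
        rw [(hM x).1, (hM y).1, hf]
      · have hy : y = cn x := hU x y hxy hf
        rw [hy, cnpres θ M hM x]
        exact hA (M x)
    have mri : ∀ a b : V', G'.Adj (L a) (L b) ↔ G'.Adj a b := by
      intro a b
      constructor
      · intro h
        have h2 := homgen φ.symm L' hL' (L a) (L b) h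
        rwa [linv, linv] at h2
      · exact homgen φ L hL a b
    refine ⟨⟨⟨L, L', linv, rinv⟩, mri _ _⟩, ?_⟩
    show L x₁ = x₂
    exact (hL x₁).2.2 x₂ hφ1.symm hφ2.symm
end

section
/- Let r ≥ 3 and let G be an r-regular graph. Then the K_r-expansion of G is not arc-transitive. In particular, the K_r-expansion of the K_r-expansion of G is not vertex-transitive. -/
open SimpleGraph Set

open VTpaper in
private lemma expansion_third {V V' : Type*} {G : SimpleGraph V} {H : SimpleGraph V'}
    {r : ℕ} {h : V' → V} (he : IsKrExpansionAlong G H r h) (hr : 3 ≤ r)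
    {x y : V'} (hxy : h x = h y) :
    ∃ z, z ≠ x ∧ z ≠ y ∧ h z = h x := by
  obtain ⟨-, hcard, -, -, -, -⟩ := he
  by_contra hc
  push_neg at hc
  have hsub : h ⁻¹' {h x} ⊆ {x, y} := by
    intro z hz
    by_contra hz2
    simp only [Set.mem_insert_iff, Set.mem_singleton_iff, not_or] at hz2
    exact hc z hz2.1 hz2.2 hz
  have h1 := Set.ncard_le_ncard hsub ((Set.finite_singleton y).insert x)
  have h2 : ({x, y} : Set V').ncard ≤ 2 := by
    refine (Set.ncard_insert_le _ _).trans ?_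
    simp
  rw [hcard (h x)] at h1
  omega

open VTpaper in
private lemma expansion_common {V V' : Type*} {G : SimpleGraph V} {H : SimpleGraph V'}
    {r : ℕ} {h : V' → V} (he : IsKrExpansionAlong G H r h) (hr : 3 ≤ r)
    {x y : V'} (hxy : h x = h y) :
    ∃ z, H.Adj x z ∧ H.Adj y z := by
  obtain ⟨z, hzx, hzy, hz⟩ := expansion_third he hr hxy
  have hcl := he.2.2.1
  exact ⟨z, (hcl z x hzx hz).symm, (hcl z y hzy (hz.trans hxy)).symm⟩

open VTpaper in
private lemma expansion_nocommon {V V' : Type*} {G : SimpleGraph V} {H : SimpleGraph V'}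
    {r : ℕ} {h : V' → V} (he : IsKrExpansionAlong G H r h)
    {x y : V'} (hadj : H.Adj x y) (hne : h x ≠ h y) :
    ¬ ∃ z, H.Adj x z ∧ H.Adj y z := by
  have huniq := he.2.2.2.2.1
  rintro ⟨z, hxz, hyz⟩
  by_cases h1 : h z = h x
  · obtain ⟨w, -, hwu⟩ := huniq y
    have e1 := hwu x ⟨hadj.symm, fun e => hne e.symm⟩
    have e2 := hwu z ⟨hyz, fun e => hne ((e.trans h1)).symm⟩
    exact hxz.ne (e1.trans e2.symm)
  by_cases h2 : h z = h y
  · obtain ⟨w, -, hwu⟩ := huniq x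
    have e1 := hwu y ⟨hadj, hne⟩
    have e2 := hwu z ⟨hxz, fun e => hne (e.trans h2)⟩
    exact hyz.ne (e1.trans e2.symm)
  · obtain ⟨w, -, hwu⟩ := huniq z
    have e1 := hwu x ⟨hxz.symm, h1⟩
    have e2 := hwu y ⟨hyz.symm, h2⟩
    exact hadj.ne (e1.trans e2.symm)

private lemma iso_common {V : Type*} {K : SimpleGraph V} (φ : K ≃g K) (x y : V) :
    (∃ z, K.Adj x z ∧ K.Adj y z) ↔ (∃ z, K.Adj (φ x) z ∧ K.Adj (φ y) z) := by
  constructor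
  · rintro ⟨z, h1, h2⟩
    exact ⟨φ z, φ.map_adj_iff.2 h1, φ.map_adj_iff.2 h2⟩
  · rintro ⟨z, h1, h2⟩
    refine ⟨φ.symm z, ?_, ?_⟩
    · have := φ.symm.map_adj_iff.2 h1; simpa using this
    · have := φ.symm.map_adj_iff.2 h2; simpa using this

open VTpaper in
/-- For `r ≥ 3`, the `K_r`-expansion of an `r`-regular graph is not
arc-transitive; hence the `K_r`-expansion of the `K_r`-expansion is not vertex-transitive. -/
theorem stmt_4 {V V' V'' : Type*} [Nonempty V] (G : SimpleGraph V) (H : SimpleGraph V')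
    (K : SimpleGraph V'') (r : ℕ) (hr : 3 ≤ r) (hreg : Regular G r)
    (hH : IsKrExpansion G H r) (hK : IsKrExpansion H K r) :
    ¬ ArcTransitive H ∧ ¬ VertexTransitive K := by
  obtain ⟨g, hg⟩ := hH
  obtain ⟨f, hf⟩ := hK
  -- a base vertex of H
  obtain ⟨p, -⟩ := hg.1 (Classical.arbitrary V)
  -- a clique partner q of p
  obtain ⟨q, hqp, -, hgq⟩ := expansion_third hg hr (rfl : g p = g p)
  have Hpq : H.Adj p q := (hg.2.2.1 q p hqp hgq).symm
  have hgpq : g p = g q := hgq.symm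
  -- the matching partner q' of p
  obtain ⟨q', ⟨Hpq', hgpq'⟩, -⟩ := hg.2.2.2.2.1 p
  constructor
  · -- not arc transitive
    intro hat
    obtain ⟨φ, hp, hq⟩ := hat p q p q' Hpq Hpq'
    obtain ⟨z, hz1, hz2⟩ := expansion_common hg hr hgpq
    refine expansion_nocommon hg Hpq' hgpq' ⟨φ z, ?_, ?_⟩
    · rw [← hp]; exact φ.map_adj_iff.2 hz1
    · rw [← hq]; exact φ.map_adj_iff.2 hz2
  · -- not vertex transitive
    intro hvt
    -- cross pairs in K over the edges pq and pq'
    obtain ⟨⟨u, u'⟩, ⟨hfu, hfu', Kuu'⟩, -⟩ := hf.2.2.2.2.2 p q Hpq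
    obtain ⟨⟨v, v'⟩, ⟨hfv, hfv', Kvv'⟩, -⟩ := hf.2.2.2.2.2 p q' Hpq'
    set Q : V'' → Prop := fun x => ∃ x' a a' b b',
      K.Adj x x' ∧ (¬ ∃ z, K.Adj x z ∧ K.Adj x' z) ∧
      K.Adj x a ∧ (∃ z, K.Adj x z ∧ K.Adj a z) ∧
      K.Adj a a' ∧ (¬ ∃ z, K.Adj a z ∧ K.Adj a' z) ∧
      K.Adj x' b ∧ (∃ z, K.Adj x' z ∧ K.Adj b z) ∧
      K.Adj b b' ∧ (¬ ∃ z, K.Adj b z ∧ K.Adj b' z) ∧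
      K.Adj a' b' ∧ (∃ z, K.Adj a' z ∧ K.Adj b' z) with hQdef
    -- Q is invariant under automorphisms
    have hQinv : ∀ (φ : K ≃g K) (x : V''), Q x → Q (φ x) := by
      intro φ x hx
      obtain ⟨x', a, a', b, b', A1, N1, C2, A2, A3, N3, A4, C4, A5, N5, A6, C6⟩ := hx
      exact ⟨φ x', φ a, φ a', φ b, φ b',
        φ.map_adj_iff.2 A1, fun h => N1 ((iso_common φ x x').2 h),
        φ.map_adj_iff.2 C2, (iso_common φ x a).1 A2,
        φ.map_adj_iff.2 A3, fun h => N3 ((iso_common φ a a').2 h),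
        φ.map_adj_iff.2 A4, (iso_common φ x' b).1 C4,
        φ.map_adj_iff.2 A5, fun h => N5 ((iso_common φ b b').2 h),
        φ.map_adj_iff.2 A6, (iso_common φ a' b').1 C6⟩
    -- Q holds at u
    have hpq : p ≠ q := Hpq.ne
    have hQu : Q u := by
      obtain ⟨z₀, Hpz, Hqz⟩ := expansion_common hg hr hgpq
      obtain ⟨⟨a, a'⟩, ⟨hfa, hfa', Kaa'⟩, -⟩ := hf.2.2.2.2.2 p z₀ Hpz
      obtain ⟨⟨b, b'⟩, ⟨hfb, hfb', Kbb'⟩, -⟩ := hf.2.2.2.2.2 q z₀ Hqz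
      have hpz : p ≠ z₀ := Hpz.ne
      have hqz : q ≠ z₀ := Hqz.ne
      have fuu' : f u ≠ f u' := by rw [hfu, hfu']; exact hpq
      have faa' : f a ≠ f a' := by rw [hfa, hfa']; exact hpz
      have fbb' : f b ≠ f b' := by rw [hfb, hfb']; exact hqz
      have hua : u ≠ a := by
        intro h
        obtain ⟨w, -, hw⟩ := hf.2.2.2.2.1 u
        have e1 := hw u' ⟨Kuu', fuu'⟩
        have e2 := hw a' ⟨h ▸ Kaa', h ▸ faa'⟩
        rw [e1.trans e2.symm, hfa'] at hfu'
        exact hqz hfu'.symm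
      have hu'b : u' ≠ b := by
        intro h
        obtain ⟨w, -, hw⟩ := hf.2.2.2.2.1 u'
        have e1 := hw u ⟨Kuu'.symm, fun e => fuu' e.symm⟩
        have e2 := hw b' ⟨h ▸ Kbb', h ▸ fbb'⟩
        rw [e1.trans e2.symm, hfb'] at hfu
        exact hpz hfu.symm
      have ha'b' : a' ≠ b' := by
        intro h
        obtain ⟨w, -, hw⟩ := hf.2.2.2.2.1 a'
        have e1 := hw a ⟨Kaa'.symm, fun e => faa' e.symm⟩
        have e2 := hw b ⟨h ▸ Kbb'.symm, h ▸ fun e => fbb' e.symm⟩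
        rw [e1.trans e2.symm, hfb] at hfa
        exact hpq hfa.symm
      refine ⟨u', a, a', b, b',
        Kuu', expansion_nocommon hf Kuu' fuu',
        hf.2.2.1 u a hua (by rw [hfu, hfa]),
        expansion_common hf hr (by rw [hfu, hfa]),
        Kaa', expansion_nocommon hf Kaa' faa',
        hf.2.2.1 u' b hu'b (by rw [hfu', hfb]),
        expansion_common hf hr (by rw [hfu', hfb]),
        Kbb', expansion_nocommon hf Kbb' fbb',
        hf.2.2.1 a' b' ha'b' (by rw [hfa', hfb']),
        expansion_common hf hr (by rw [hfa', hfb'])⟩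
    -- Q fails at v
    have hnQv : ¬ Q v := by
      rintro ⟨w, a, a', b, b', A1, N1, A2, C2, A3, N3, A4, C4, A5, N5, A6, C6⟩
      have fvw : f v ≠ f w := fun h => N1 (expansion_common hf hr h)
      have hwv' : w = v' := by
        obtain ⟨w0, -, hw0⟩ := hf.2.2.2.2.1 v
        have e1 := hw0 w ⟨A1, fvw⟩
        have e2 := hw0 v' ⟨Kvv', by rw [hfv, hfv']; exact Hpq'.ne⟩
        exact e1.trans e2.symm
      have fva : f v = f a := by
        by_contra h
        exact N1 (by exact absurd C2 (expansion_nocommon hf A2 h))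
      have faa' : f a ≠ f a' := fun h => N3 (expansion_common hf hr h)
      have fwb : f w = f b := by
        by_contra h
        exact absurd C4 (expansion_nocommon hf A4 h)
      have fbb' : f b ≠ f b' := fun h => N5 (expansion_common hf hr h)
      have fab : f a' = f b' := by
        by_contra h
        exact absurd C6 (expansion_nocommon hf A6 h)
      have H1 : H.Adj p (f a') := by
        have := hf.2.2.2.1 a a' A3 faa'
        rwa [← fva, hfv] at this
      have H2 : H.Adj q' (f a') := by
        have := hf.2.2.2.1 b b' A5 fbb'
        rwa [← fwb, hwv', hfv', ← fab] at this
      exact expansion_nocommon hg Hpq' hgpq' ⟨f a', H1, H2⟩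
    obtain ⟨φ, hφ⟩ := hvt u v
    exact hnQv (hφ ▸ hQinv φ u hQu)
end

section
/- Let r ≥ 3, let G be an r-regular graph, and suppose G has a mixed-r-separation (A,B) whose separator consists of r edges forming a matching and such that G[A] is a complete graph on r vertices. Then G is not arc-transitive: specifically, there is a vertex u with an isolated vertex v₁ and a non-isolated vertex v₂ in the subgraph induced on N(u), and no automorphism of G maps (u,v₁) to (u,v₂). -/
open SimpleGraph Set

open VTpaper in
/-- An `r`-regular graph (`r ≥ 3`) having a mixed-`r`-separation whose
separator is a matching of `r` edges and with `G[A] = K_r` is not arc-transitive;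
specifically some vertex `u` has an isolated and a non-isolated neighbour in `G[N(u)]`
that no automorphism can identify. -/
theorem stmt_5 {V : Type*} (G : SimpleGraph V) (r : ℕ) (hr : 3 ≤ r)
    (hreg : Regular G r) (A B : Set V)
    (hcover : A ∪ B = Set.univ) (hdisj : A ∩ B = ∅)
    (hA : A.Nonempty) (hB : B.Nonempty)
    (hcard : (cutEdges G A B).ncard = r)
    (hmatch : IsMatchingSet (cutEdges G A B))
    (hKr : A.ncard = r ∧ G.IsClique A) :
    ¬ ArcTransitive G ∧
    ∃ u v₁ v₂ : V, G.Adj u v₁ ∧ G.Adj u v₂ ∧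
      (∀ w : V, G.Adj u w → ¬ G.Adj v₁ w) ∧
      (∃ w : V, G.Adj u w ∧ G.Adj v₂ w) ∧
      ∀ φ : G ≃g G, ¬ (φ u = u ∧ φ v₁ = v₂) := by
  obtain ⟨hAcard, hAclique⟩ := hKr
  have hAfin : A.Finite := A.finite_of_ncard_ne_zero (by omega)
  obtain ⟨u, hu⟩ := hA
  have hNcard := hreg u
  have hNfin : (G.neighborSet u).Finite :=
    (G.neighborSet u).finite_of_ncard_ne_zero (by omega)
  have hdisj' : ∀ x, x ∈ A → x ∈ B → False := by
    intro x hxA hxB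
    have hx : x ∈ A ∩ B := ⟨hxA, hxB⟩
    rw [hdisj] at hx; exact hx
  have hAB : ∀ x : V, x ∉ A → x ∈ B := by
    intro x hx
    have hxu : x ∈ A ∪ B := by rw [hcover]; trivial
    exact hxu.resolve_left hx
  have hfin1 : (A \ {u}).Finite := hAfin.diff
  have hsub : A \ {u} ⊆ G.neighborSet u := by
    rintro a ⟨haA, hane⟩
    exact hAclique hu haA fun h => hane (h ▸ rfl)
  have hsubcard : (A \ {u}).ncard = r - 1 := by
    rw [Set.ncard_diff_singleton_of_mem hu, hAcard]
  -- v₁ : the unique neighbour of u outside A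
  have hss : A \ {u} ⊂ G.neighborSet u := by
    refine ⟨hsub, fun h => ?_⟩
    have := Set.ncard_le_ncard h hfin1
    omega
  obtain ⟨v₁, hv₁N, hv₁n⟩ := Set.exists_of_ssubset hss
  have hadj1 : G.Adj u v₁ := hv₁N
  have hv₁A : v₁ ∉ A := by
    intro h
    refine hv₁n ⟨h, fun heq => ?_⟩
    rw [Set.mem_singleton_iff] at heq
    exact G.irrefl (heq ▸ hadj1)
  have hv₁B : v₁ ∈ B := hAB v₁ hv₁A
  have huv₁ : u ≠ v₁ := fun h => hdisj' u hu (h ▸ hv₁B)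
  -- uniqueness of the neighbour of u in B
  have huniq : ∀ w, G.Adj u w → w ∈ B → w = v₁ := by
    intro w hw hwB
    by_contra hne
    have hwA : w ∉ A := fun h => hdisj' w h hwB
    have h1 : (insert v₁ (A \ {u})).ncard = r := by
      rw [Set.ncard_insert_of_notMem (fun h => hv₁A h.1) hfin1, hsubcard]
      omega
    have hnotmem : w ∉ insert v₁ (A \ {u}) := by
      rintro (rfl | h)
      · exact hne rfl
      · exact hwA h.1
    have h2 : (insert w (insert v₁ (A \ {u}))).ncard = r + 1 := by
      rw [Set.ncard_insert_of_notMem hnotmem (hfin1.insert _), h1]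
    have hSsub : insert w (insert v₁ (A \ {u})) ⊆ G.neighborSet u := by
      rintro x (rfl | rfl | hx)
      · exact hw
      · exact hadj1
      · exact hsub hx
    have := Set.ncard_le_ncard hSsub hNfin
    omega
  -- v₁ is isolated in G[N(u)]
  have hiso : ∀ w, G.Adj u w → ¬ G.Adj v₁ w := by
    intro w hw hvw
    by_cases hwA : w ∈ A
    · have hne : w ≠ u := fun h => G.irrefl (h ▸ hw)
      have he1 : s(u, v₁) ∈ cutEdges G A B := ⟨u, v₁, hu, hv₁B, hadj1, rfl⟩
      have he2 : s(w, v₁) ∈ cutEdges G A B := ⟨w, v₁, hwA, hv₁B, hvw.symm, rfl⟩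
      have hnef : s(u, v₁) ≠ s(w, v₁) := by
        intro h
        rw [Sym2.eq_iff] at h
        rcases h with ⟨h, -⟩ | ⟨h, -⟩
        · exact hne h.symm
        · exact huv₁ h
      exact hmatch he1 he2 hnef v₁ ⟨by simp [Sym2.mem_iff], by simp [Sym2.mem_iff]⟩
    · have hwv : w = v₁ := huniq w hw (hAB w hwA)
      exact G.irrefl (hwv ▸ hvw)
  -- pick v₂ = a and witness a' in A \ {u}
  have h2lt : 1 < (A \ {u}).ncard := by omega
  obtain ⟨a, ha, a', ha', hne⟩ := (Set.one_lt_ncard hfin1).mp h2lt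
  have hadj2 : G.Adj u a := hsub ha
  have hadj3 : G.Adj u a' := hsub ha'
  have hadj4 : G.Adj a a' := hAclique ha.1 ha'.1 hne
  -- no automorphism identifies them
  have hfinal : ∀ φ : G ≃g G, ¬ (φ u = u ∧ φ v₁ = a) := by
    rintro φ ⟨h1, h2⟩
    have hx1 : G.Adj (φ u) (φ (φ.symm a')) := by
      rw [h1, φ.apply_symm_apply]; exact hadj3
    have hx2 : G.Adj (φ v₁) (φ (φ.symm a')) := by
      rw [h2, φ.apply_symm_apply]; exact hadj4
    exact hiso (φ.symm a') (φ.map_adj_iff.mp hx1) (φ.map_adj_iff.mp hx2)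
  refine ⟨fun hAT => ?_, u, v₁, a, hadj1, hadj2, hiso, ⟨a', hadj3, hadj4⟩, hfinal⟩
  obtain ⟨φ, hφ⟩ := hAT u v₁ u a hadj1 hadj2
  exact hfinal φ hφ
end

section
/- Let G be a connected graph and L = L(G) its line graph. If (A',B') is a proper separation of L, then (A,B) := ({v ∈ V(G) : E(v) ⊆ A'}, {v ∈ V(G) : E(v) ⊆ B'}) satisfies A ∪ B = V(G), both A∖B and B∖A are nonempty, and A ∩ B = {v ∈ V(G) : E(v) ⊆ A' ∩ B'}. (Here E(v) denotes the set of edges of G incident to v.) -/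
open SimpleGraph Set

open VTpaper in
/-- A proper separation `(A',B')` of the line graph of a connected graph
`G` induces a mixed-separation of `G` as described. -/
theorem stmt_7 {V : Type*} (G : SimpleGraph V) (hconn : G.Connected)
    (A' B' : Set G.edgeSet)
    (hcover : A' ∪ B' = Set.univ)
    (hnoedge : ∀ a ∈ A' \ B', ∀ b ∈ B' \ A', ¬ (LineGraph G).Adj a b)
    (hA : (A' \ B').Nonempty) (hB : (B' \ A').Nonempty) :
    let A : Set V := {v | ∀ e : G.edgeSet, v ∈ e.1 → e ∈ A'}
    let B : Set V := {v | ∀ e : G.edgeSet, v ∈ e.1 → e ∈ B'}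
    A ∪ B = Set.univ ∧ (A \ B).Nonempty ∧ (B \ A).Nonempty ∧
    A ∩ B = {v | ∀ e : G.edgeSet, v ∈ e.1 → e ∈ A' ∩ B'} := by
  intro A B
  have hcov : ∀ f : G.edgeSet, f ∈ A' ∨ f ∈ B' := by
    intro f
    have : f ∈ A' ∪ B' := by rw [hcover]; trivial
    exact this
  have hside : ∀ (X Y : Set G.edgeSet), (∀ f : G.edgeSet, f ∈ X ∨ f ∈ Y) →
      (∀ a ∈ X \ Y, ∀ b ∈ Y \ X, ¬ (LineGraph G).Adj a b) →
      (X \ Y).Nonempty →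
      ∃ v : V, (∀ e : G.edgeSet, v ∈ e.1 → e ∈ X) ∧ ¬ (∀ e : G.edgeSet, v ∈ e.1 → e ∈ Y) := by
    rintro X Y hc hno ⟨e, heX, heY⟩
    refine ⟨e.1.out.1, ?_, ?_⟩
    · intro f hf
      by_contra hfX
      have hfY : f ∈ Y := (hc f).resolve_left hfX
      exact hno e ⟨heX, heY⟩ f ⟨hfY, hfX⟩
        (show e ≠ f ∧ ∃ v : V, v ∈ e.1 ∧ v ∈ f.1 from
          ⟨fun h => heY (h ▸ hfY), e.1.out.1, Sym2.out_fst_mem e.1, hf⟩)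
    · intro h
      exact heY (h e (Sym2.out_fst_mem e.1))
  have hno' : ∀ a ∈ B' \ A', ∀ b ∈ A' \ B', ¬ (LineGraph G).Adj a b :=
    fun a ha b hb hadj => hnoedge b hb a ha ((LineGraph G).adj_symm hadj)
  refine ⟨?_, ?_, ?_, ?_⟩
  · ext v
    simp only [Set.mem_union, Set.mem_univ, iff_true]
    by_contra hv
    push_neg at hv
    obtain ⟨hvA, hvB⟩ := hv
    simp only [A, B, Set.mem_setOf_eq] at hvA hvB
    push_neg at hvA hvB
    obtain ⟨e, hve, heA⟩ := hvA
    obtain ⟨f, hvf, hfB⟩ := hvB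
    have heB : e ∈ B' := (hcov e).resolve_left heA
    have hfA : f ∈ A' := (hcov f).resolve_right hfB
    have hef : f ≠ e := fun h => heA (h ▸ hfA)
    exact hnoedge f ⟨hfA, hfB⟩ e ⟨heB, heA⟩ (show f ≠ e ∧ ∃ v : V, v ∈ f.1 ∧ v ∈ e.1 from ⟨hef, v, hvf, hve⟩)
  · obtain ⟨v, h1, h2⟩ := hside A' B' hcov hnoedge hA
    exact ⟨v, h1, h2⟩
  · obtain ⟨v, h1, h2⟩ := hside B' A' (fun f => (hcov f).symm) hno' hB
    exact ⟨v, h1, h2⟩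
  · ext v
    simp only [A, B, Set.mem_inter_iff, Set.mem_setOf_eq]
    constructor
    · rintro ⟨h1, h2⟩ e he
      exact ⟨h1 e he, h2 e he⟩
    · intro h
      exact ⟨fun e he => (h e he).1, fun e he => (h e he).2⟩
end

section
/- Let G be a 3-regular internally-4-connected graph. Then the line graph L(G) is 4-connected. -/
open SimpleGraph Set

open VTpaper

section Helpers

variable {V : Type*} [Fintype V] {G : SimpleGraph V}

lemma degsplit (hreg : Regular G 3) (P : Set V) (v : V) :
    (G.neighborSet v ∩ P).ncard + (G.neighborSet v ∩ Pᶜ).ncard = 3 := by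
  rw [← Set.ncard_union_eq (disjoint_compl_right.mono inter_subset_right inter_subset_right)
    (Set.toFinite _) (Set.toFinite _), Set.inter_union_compl]
  exact hreg v


lemma cut_symm (A B : Set V) : cutEdges G A B = cutEdges G B A := by
  ext e
  constructor <;> rintro ⟨a, b, ha, hb, hadj, rfl⟩ <;>
    exact ⟨b, a, hb, ha, hadj.symm, Sym2.eq_swap⟩


/-- three-edge-connectivity -/
lemma three_edge_conn (hreg : Regular G 3) (h3 : KConnected 3 G) (X : Set V)
    (hX : X.Nonempty) (hXc : Xᶜ.Nonempty) : 3 ≤ (cutEdges G X Xᶜ).ncard := by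
  by_contra hlt
  push_neg at hlt
  obtain ⟨x₀, hx₀⟩ := hX
  haveI : Nonempty V := ⟨x₀⟩
  have hX : X.Nonempty := ⟨x₀, hx₀⟩
  set R : Set V := {q | q ∈ Xᶜ ∧ ∃ p ∈ X, G.Adj p q} with hR
  -- R injects into the cut
  have hRcard : R.ncard ≤ (cutEdges G X Xᶜ).ncard := by
    have hex : ∀ q : V, ∃ e, q ∈ R → e ∈ cutEdges G X Xᶜ ∧ q ∈ e := by
      intro q
      by_cases hq : q ∈ R
      · obtain ⟨hqc, p, hp, hadj⟩ := hq
        exact ⟨s(p, q), fun _ => ⟨⟨p, q, hp, hqc, hadj, rfl⟩, Sym2.mem_mk_right _ _⟩⟩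
      · exact ⟨s(x₀, x₀), fun hh => absurd hh hq⟩
    choose f hf using hex
    have hf1 : ∀ q ∈ R, f q ∈ cutEdges G X Xᶜ := fun q hq => (hf q hq).1
    have hf2 : ∀ q ∈ R, q ∈ f q := fun q hq => (hf q hq).2
    apply Set.ncard_le_ncard_of_injOn f hf1 _ (Set.toFinite _)
    intro q1 hq1 q2 hq2 heq
    obtain ⟨p1, q1', hp1, hq1', -, he1⟩ := hf1 q1 hq1
    have h1 : q1 = q1' := by
      have := hf2 q1 hq1
      rw [he1, Sym2.mem_iff] at this
      rcases this with h | h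
      · exact absurd (h ▸ hq1.1) (by simp [hp1])
      · exact h
    obtain ⟨p2, q2', hp2, hq2', -, he2⟩ := hf1 q2 hq2
    have h2 : q2 = q2' := by
      have := hf2 q2 hq2
      rw [he2, Sym2.mem_iff] at this
      rcases this with h | h
      · exact absurd (h ▸ hq2.1) (by simp [hp2])
      · exact h
    rw [heq, he2] at he1
    rw [Sym2.eq_iff] at he1
    rcases he1 with ⟨h, h'⟩ | ⟨h, h'⟩
    · rw [h1, h2, h']
    · exact absurd hq1.1 (by rw [h1, ← h]; simp [hp2])
  have hRlt : R.ncard < 3 := lt_of_le_of_lt hRcard hlt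
  -- Xᶜ \ R nonempty
  have hXcR : (Xᶜ \ R).Nonempty := by
    by_contra hempty
    rw [Set.not_nonempty_iff_eq_empty, Set.diff_eq_empty] at hempty
    -- Xᶜ ⊆ R so ncard Xᶜ ≤ 2
    have hXcc : Xᶜ.ncard ≤ 2 := by
      have := Set.ncard_le_ncard hempty (Set.toFinite _)
      omega
    obtain ⟨u, hu⟩ := hXc
    have hXcn : 1 ≤ Xᶜ.ncard := by
      have := (Set.ncard_pos (Set.toFinite _)).2 ⟨u, hu⟩
      omega
    interval_cases h : Xᶜ.ncard
    · -- Xᶜ = {u}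
      obtain ⟨w, hw⟩ := Set.ncard_eq_one.1 h
      have husingle : u = w := by rw [hw] at hu; exact hu
      subst husingle
      -- all 3 neighbors of u are in X
      have himg : (fun p => s(p, u)) '' (G.neighborSet u) ⊆ cutEdges G X Xᶜ := by
        rintro e ⟨p, hp, rfl⟩
        refine ⟨p, u, ?_, hu, (by exact hp : G.Adj u p).symm, rfl⟩
        have hpu : p ≠ u := fun hh => G.loopless.irrefl u (hh ▸ hp)
        have : p ∉ Xᶜ := by rw [hw]; simpa using hpu
        simpa using this
      have hinj : Set.InjOn (fun p => s(p, u)) (G.neighborSet u) := by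
        intro p1 hp1 p2 hp2 he
        simp only [Sym2.eq_iff] at he
        rcases he with ⟨h, -⟩ | ⟨h, h'⟩
        · exact h
        · exact absurd hp1 (by rw [h]; simp)
      have := Set.ncard_le_ncard himg (Set.toFinite _)
      rw [Set.ncard_image_of_injOn hinj, hreg u] at this
      omega
    · -- Xᶜ = {u, w}
      obtain ⟨u1, u2, hne, hw⟩ := Set.ncard_eq_two.1 h
      have hu1 : u1 ∈ Xᶜ := by rw [hw]; simp
      have hu2 : u2 ∈ Xᶜ := by rw [hw]; simp
      -- each has ≥ 2 neighbors in X
      have key : ∀ z z' : V, z ∈ Xᶜ → Xᶜ = {z, z'} →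
          (fun p => s(p, z)) '' (G.neighborSet z ∩ X) ⊆ cutEdges G X Xᶜ ∧
          2 ≤ ((fun p => s(p, z)) '' (G.neighborSet z ∩ X)).ncard := by
        intro z z' hz hzz
        constructor
        · rintro e ⟨p, ⟨hp, hpX⟩, rfl⟩
          exact ⟨p, z, hpX, hz, (by exact hp : G.Adj z p).symm, rfl⟩
        · have hinj : Set.InjOn (fun p => s(p, z)) (G.neighborSet z ∩ X) := by
            intro p1 hp1 p2 hp2 he
            simp only [Sym2.eq_iff] at he
            rcases he with ⟨h, -⟩ | ⟨h, h'⟩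
            · exact h
            · exact absurd hp1.1 (by rw [h]; simp)
          rw [Set.ncard_image_of_injOn hinj]
          -- neighborSet z ∩ X ⊇ neighborSet z \ {z'}
          have hsub : G.neighborSet z \ {z'} ⊆ G.neighborSet z ∩ X := by
            rintro p ⟨hp, hpz'⟩
            refine ⟨hp, ?_⟩
            by_contra hpX
            have : p ∈ Xᶜ := hpX
            rw [hzz] at this
            rcases this with h | h
            · exact G.loopless.irrefl z (h ▸ hp)
            · exact hpz' h
          have h1 := Set.ncard_le_ncard hsub (Set.toFinite _)
          have h2 : G.neighborSet z ⊆ (G.neighborSet z \ {z'}) ∪ {z'} := by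
            intro p hp; by_cases hh : p = z' <;> simp [hh, hp]
          have h3 := Set.ncard_le_ncard h2 (Set.toFinite _)
          have h4 := Set.ncard_union_le (G.neighborSet z \ {z'}) {z'}
          rw [hreg z] at h3
          simp only [Set.ncard_singleton] at h4
          omega
      obtain ⟨hs1, hc1⟩ := key u1 u2 hu1 hw
      obtain ⟨hs2, hc2⟩ := key u2 u1 hu2 (by rw [hw, Set.pair_comm])
      have hdisj : Disjoint ((fun p => s(p, u1)) '' (G.neighborSet u1 ∩ X))
          ((fun p => s(p, u2)) '' (G.neighborSet u2 ∩ X)) := by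
        rw [Set.disjoint_left]
        rintro e ⟨p, ⟨-, hpX⟩, rfl⟩ ⟨q, ⟨-, hqX⟩, he⟩
        simp only [Sym2.eq_iff] at he
        rcases he with ⟨-, h⟩ | ⟨h, h'⟩
        · exact hne (h.symm)
        · exact absurd hu2 (by simp only [Set.mem_compl_iff, not_not]; rw [h']; exact hpX)
      have hun := Set.ncard_union_eq hdisj (Set.toFinite _) (Set.toFinite _)
      have hsub := Set.ncard_le_ncard (Set.union_subset hs1 hs2) (Set.toFinite _)
      omega
  -- now use vertex connectivity
  have hRfin : R.Finite := Set.toFinite _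
  have hconn := h3.2 R hRfin hRlt
  obtain ⟨x, hx⟩ := hX
  obtain ⟨y, hy⟩ := hXcR
  have hxR : x ∈ Rᶜ := fun hh => (hh.1 : x ∈ Xᶜ) hx
  have hyR : y ∈ Rᶜ := hy.2
  have hreach := hconn.preconnected ⟨x, hxR⟩ ⟨y, hyR⟩
  obtain ⟨w⟩ := hreach
  obtain ⟨d, -, hd1, hd2⟩ := w.exists_boundary_dart {z : ↥(Rᶜ) | (z : V) ∈ X} hx (fun hh => hy.1 hh)
  have hadj : G.Adj (d.fst : V) (d.snd : V) := d.adj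
  have : (d.snd : V) ∈ R := ⟨fun hh => hd2 hh, ⟨d.fst, hd1, hadj⟩⟩
  exact d.snd.2 this


omit [Fintype V] in
lemma claw_aux (C : Set V) (h : InducesClaw G C) (v₁ v₂ : V) (h₁ : v₁ ∈ C) (h₂ : v₂ ∈ C)
    (hne : v₁ ≠ v₂) (hd₁ : 2 ≤ ({w | w ∈ C ∧ G.Adj v₁ w}).ncard)
    (hd₂ : 2 ≤ ({w | w ∈ C ∧ G.Adj v₂ w}).ncard) : False := by
  obtain ⟨φ⟩ := h
  have key : ∀ (v : V) (hv : v ∈ C), 2 ≤ ({w | w ∈ C ∧ G.Adj v w}).ncard →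
      φ ⟨v, hv⟩ = Sum.inl 0 := by
    intro v hv hd
    rcases hφ : φ ⟨v, hv⟩ with z | j
    · exact congrArg Sum.inl (Subsingleton.elim z 0) ▸ rfl
    · exfalso
      -- neighbor set equivalence
      have e₁ : {w | w ∈ C ∧ G.Adj v w} ≃ ((G.induce C).neighborSet ⟨v, hv⟩) :=
        { toFun := fun w => ⟨⟨w.1, w.2.1⟩, w.2.2⟩
          invFun := fun w => ⟨w.1.1, w.1.2, w.2⟩
          left_inv := fun w => rfl
          right_inv := fun w => rfl }
      have e₂ := φ.mapNeighborSet ⟨v, hv⟩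
      have hcard : ({w | w ∈ C ∧ G.Adj v w}).ncard =
          ((completeBipartiteGraph (Fin 1) (Fin 3)).neighborSet (φ ⟨v, hv⟩)).ncard := by
        rw [← Nat.card_coe_set_eq, ← Nat.card_coe_set_eq]
        exact Nat.card_congr (e₁.trans e₂)
      rw [hφ] at hcard
      have hsub : (completeBipartiteGraph (Fin 1) (Fin 3)).neighborSet (Sum.inr j) ⊆
          {Sum.inl 0} := by
        intro w hw
        rcases w with a | b
        · simp [Subsingleton.elim a 0]
        · simp only [mem_neighborSet, completeBipartiteGraph_adj] at hw
          simp at hw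
      have := Set.ncard_le_ncard hsub (Set.toFinite _)
      rw [← hcard] at this
      simp only [Set.ncard_singleton] at this
      omega
  have k1 := key v₁ h₁ hd₁
  have k2 := key v₂ h₂ hd₂
  have : φ ⟨v₁, h₁⟩ = φ ⟨v₂, h₂⟩ := by rw [k1, k2]
  exact hne (congrArg Subtype.val (φ.injective this))


omit [Fintype V] in
lemma line_step {S : Set ↥G.edgeSet} (e f : ↥G.edgeSet) (he : e ∈ Sᶜ) (hf : f ∈ Sᶜ)
    (v : V) (hv : v ∈ e.1) (hv' : v ∈ f.1) :
    ((LineGraph G).induce Sᶜ).Reachable ⟨e, he⟩ ⟨f, hf⟩ := by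
  by_cases h : e = f
  · subst h; rfl
  · exact SimpleGraph.Adj.reachable (by exact (show (LineGraph G).Adj e f from ⟨h, v, hv, hv'⟩))


omit [Fintype V] in
lemma line_reach_walk {T : Set (Sym2 V)} {S : Set ↥G.edgeSet} (hTS : T = Subtype.val '' S)
    {x y : V} (w : (G.deleteEdges T).Walk x y) :
    ∀ (e : ↥G.edgeSet), ∀ (he : e ∈ Sᶜ), x ∈ e.1 → ∀ (f : ↥G.edgeSet), ∀ (hf : f ∈ Sᶜ),
      y ∈ f.1 → ((LineGraph G).induce Sᶜ).Reachable ⟨e, he⟩ ⟨f, hf⟩ := by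
  induction w with
  | nil => exact fun e he hx f hf hy => line_step e f he hf _ hx hy
  | @cons x x' y hadj p ih =>
    intro e he hx f hf hy
    rw [SimpleGraph.deleteEdges_adj] at hadj
    have hg : s(x, x') ∈ G.edgeSet := hadj.1
    set g : ↥G.edgeSet := ⟨s(x, x'), hg⟩ with hgdef
    have hgS : g ∈ Sᶜ := by
      intro hmem
      exact hadj.2 (hTS ▸ ⟨g, hmem, rfl⟩)
    exact (line_step e g he hgS x hx (Sym2.mem_mk_left _ _)).trans
      (ih g hgS (Sym2.mem_mk_right _ _) f hf hy)


omit [Fintype V] in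
lemma walk_end_nbr {H : SimpleGraph V} {a v : V} (p : H.Walk a v) (h0 : ∃ w, H.Adj a w) :
    ∃ w, H.Adj v w := by
  induction p with
  | nil => exact h0
  | @cons x y z h q ih => exact ih ⟨x, h.symm⟩


/-- the non-matching case -/
lemma nonmatch_aux (hreg : Regular G 3)
    (h3ec : ∀ X : Set V, X.Nonempty → Xᶜ.Nonempty → 3 ≤ (cutEdges G X Xᶜ).ncard)
    (P : Set V) (t₁ t₂ t₃ : Sym2 V) (hne12 : t₁ ≠ t₂)
    (hcut : cutEdges G P Pᶜ = {t₁, t₂, t₃}) (v : V) (hv : v ∈ P)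
    (hv1 : v ∈ t₁) (hv2 : v ∈ t₂) (hnb : ∃ w ∈ P, G.Adj v w) : False := by
  obtain ⟨w, hwP, hwadj⟩ := hnb
  have ht1 : t₁ ∈ cutEdges G P Pᶜ := by rw [hcut]; simp
  have ht2 : t₂ ∈ cutEdges G P Pᶜ := by rw [hcut]; simp
  obtain ⟨p1, q1, hp1, hq1, hadj1, he1⟩ := ht1
  obtain ⟨p2, q2, hp2, hq2, hadj2, he2⟩ := ht2
  have hv1' : v = p1 := by
    rw [he1, Sym2.mem_iff] at hv1
    rcases hv1 with h | h
    · exact h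
    · exact absurd (h ▸ hv) hq1
  have hv2' : v = p2 := by
    rw [he2, Sym2.mem_iff] at hv2
    rcases hv2 with h | h
    · exact h
    · exact absurd (h ▸ hv) hq2
  subst hv1'
  have hy : q1 ≠ q2 := by
    intro hh
    exact hne12 (by rw [he1, he2, ← hv2', hh])
  -- X = P \ {v}
  set X := P \ {v} with hXdef
  have hwne : w ≠ v := fun hh => G.loopless.irrefl v (hh ▸ hwadj)
  have hXne : X.Nonempty := ⟨w, hwP, hwne⟩
  have hXcne : Xᶜ.Nonempty := ⟨q1, fun hh => hq1 hh.1⟩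
  have hq1P : q1 ∉ P := hq1
  have hq2P : q2 ∉ P := hq2
  -- neighbors of v in P: at most 1
  have hnsP : (G.neighborSet v ∩ P).ncard ≤ 1 := by
    have hsub : {q1, q2} ⊆ G.neighborSet v ∩ Pᶜ := by
      rintro z (rfl | rfl)
      · exact ⟨hadj1, hq1⟩
      · exact ⟨hv2' ▸ hadj2, hq2⟩
    have h2 := Set.ncard_le_ncard hsub (Set.toFinite _)
    rw [Set.ncard_pair hy] at h2
    have := degsplit hreg P v
    omega
  -- cut(X) is small
  have hbound : cutEdges G X Xᶜ ⊆ insert t₃ ((fun p => s(p, v)) '' (G.neighborSet v ∩ P)) := by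
    rintro e ⟨p', q', hp', hq', hadj', rfl⟩
    simp only [hXdef, Set.mem_diff, Set.mem_singleton_iff] at hp'
    have hq'' : q' ∉ P ∨ q' = v := by
      by_cases hP : q' ∈ P
      · right
        by_contra hnev
        exact hq' ⟨hP, hnev⟩
      · exact Or.inl hP
    rcases hq'' with hq' | hq'
    · -- q' ∉ P
      have hmem : s(p', q') ∈ cutEdges G P Pᶜ := ⟨p', q', hp'.1, hq', hadj', rfl⟩
      rw [hcut] at hmem
      rcases hmem with h | h | h
      · exfalso
        rw [he1, Sym2.eq_iff] at h
        rcases h with ⟨h, -⟩ | ⟨-, h'⟩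
        · exact hp'.2 h
        · exact hq' (h' ▸ hv)
      · exfalso
        rw [he2, Sym2.eq_iff] at h
        rcases h with ⟨h, -⟩ | ⟨-, h'⟩
        · exact hp'.2 (h.trans hv2'.symm)
        · exact hq' (h' ▸ hp2)
      · exact Or.inl h
    · subst hq'
      exact Or.inr ⟨p', ⟨hadj'.symm, hp'.1⟩, rfl⟩
  have hcard : (cutEdges G X Xᶜ).ncard ≤ 2 := by
    have h1 := Set.ncard_le_ncard hbound (Set.toFinite _)
    have h2 := Set.ncard_insert_le t₃ ((fun p => s(p, v)) '' (G.neighborSet v ∩ P))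
    have h3 := Set.ncard_image_le (s := G.neighborSet v ∩ P)
      (f := fun p => s(p, v)) (Set.toFinite _)
    omega
  have := h3ec X hXne hXcne
  omega

/-- a vertex on the P-side of a matching 3-cut has at most its partner as cross-neighbour -/
lemma cross_unique (P : Set V) (t₁ t₂ t₃ : Sym2 V) (p₁ p₂ p₃ q₁ q₂ q₃ : V)
    (hcut : cutEdges G P Pᶜ = {t₁, t₂, t₃})
    (ht₁ : t₁ = s(p₁, q₁)) (ht₂ : t₂ = s(p₂, q₂)) (ht₃ : t₃ = s(p₃, q₃))
    (hp₁ : p₁ ∈ P) (hq₁ : q₁ ∈ Pᶜ) (hq₂ : q₂ ∈ Pᶜ) (hq₃ : q₃ ∈ Pᶜ)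
    (h12 : p₁ ≠ p₂) (h13 : p₁ ≠ p₃) :
    G.neighborSet p₁ ∩ Pᶜ ⊆ {q₁} := by
  rintro q ⟨hq, hqP⟩
  have hmem : s(p₁, q) ∈ cutEdges G P Pᶜ := ⟨p₁, q, hp₁, hqP, hq, rfl⟩
  rw [hcut] at hmem
  rcases hmem with h | h | h
  · rw [ht₁, Sym2.eq_iff] at h
    rcases h with ⟨-, h⟩ | ⟨h, -⟩
    · exact h
    · exact absurd (h ▸ hp₁) hq₁
  · exfalso
    rw [ht₂, Sym2.eq_iff] at h
    rcases h with ⟨h, -⟩ | ⟨h, -⟩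
    · exact h12 h
    · exact (h ▸ hq₂) hp₁
  · exfalso
    replace h : s(p₁, q) = t₃ := h
    rw [ht₃, Sym2.eq_iff] at h
    rcases h with ⟨h, -⟩ | ⟨h, -⟩
    · exact h13 h
    · exact (h ▸ hq₃) hp₁

lemma two_side (hreg : Regular G 3) (P : Set V) (t₁ t₂ t₃ : Sym2 V)
    (p₁ p₂ p₃ q₁ q₂ q₃ : V)
    (hcut : cutEdges G P Pᶜ = {t₁, t₂, t₃})
    (ht₁ : t₁ = s(p₁, q₁)) (ht₂ : t₂ = s(p₂, q₂)) (ht₃ : t₃ = s(p₃, q₃))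
    (hp₁ : p₁ ∈ P) (hq₁ : q₁ ∈ Pᶜ) (hq₂ : q₂ ∈ Pᶜ) (hq₃ : q₃ ∈ Pᶜ)
    (h12 : p₁ ≠ p₂) (h13 : p₁ ≠ p₃) :
    2 ≤ (G.neighborSet p₁ ∩ P).ncard := by
  have h := cross_unique P t₁ t₂ t₃ p₁ p₂ p₃ q₁ q₂ q₃ hcut ht₁ ht₂ ht₃ hp₁ hq₁ hq₂ hq₃ h12 h13
  have h1 := Set.ncard_le_ncard h (Set.toFinite _)
  rw [Set.ncard_singleton] at h1
  have := degsplit hreg P p₁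
  omega


/-- matching case with a big complement side -/
lemma match_side_aux (hi4 : InternallyFourConnected G) (A : Set V)
    (t₁ t₂ t₃ : Sym2 V) (a₁ a₂ a₃ b₁ b₂ b₃ : V)
    (hcut : cutEdges G A Aᶜ = {t₁, t₂, t₃})
    (ht₁ : t₁ = s(a₁, b₁)) (ht₂ : t₂ = s(a₂, b₂)) (ht₃ : t₃ = s(a₃, b₃))
    (ha₁ : a₁ ∈ A) (ha₂ : a₂ ∈ A) (ha₃ : a₃ ∈ A)
    (hb₁ : b₁ ∈ Aᶜ) (hb₂ : b₂ ∈ Aᶜ) (hb₃ : b₃ ∈ Aᶜ)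
    (hb12 : b₁ ≠ b₂) (hb13 : b₁ ≠ b₃) (hb23 : b₂ ≠ b₃) (ha12 : a₁ ≠ a₂)
    (h2a₁ : 2 ≤ (G.neighborSet a₁ ∩ A).ncard) (h2a₂ : 2 ≤ (G.neighborSet a₂ ∩ A).ncard)
    (h2b₁ : 2 ≤ (G.neighborSet b₁ ∩ Aᶜ).ncard) (h2b₂ : 2 ≤ (G.neighborSet b₂ ∩ Aᶜ).ncard)
    (hne : (Aᶜ \ {b₁, b₂, b₃}).Nonempty) : False := by
  set C := A ∪ {b₁, b₂, b₃} with hC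
  set D := Aᶜ with hD
  have hCD : C ∩ D = {b₁, b₂, b₃} := by
    ext x
    constructor
    · rintro ⟨hx1 | hx1, hx2⟩
      · exact absurd hx1 hx2
      · exact hx1
    · rintro hx
      refine ⟨Or.inr hx, ?_⟩
      rcases hx with rfl | rfl | rfl <;> assumption
  have hsep : IsSep G 3 C D := by
    refine ⟨?_, ⟨a₁, Or.inl ha₁, fun hh => hh ha₁⟩, ?_, ?_, ?_⟩
    · rw [hC, Set.union_assoc]
      apply Set.eq_univ_of_univ_subset
      intro x _
      by_cases hx : x ∈ A
      · exact Or.inl hx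
      · exact Or.inr (Or.inr hx)
    · obtain ⟨b, hb, hbn⟩ := hne
      refine ⟨b, hb, ?_⟩
      rintro (h | h)
      · exact hb h
      · exact hbn h
    · rintro x ⟨hx1, hx2⟩ y ⟨hy1, hy2⟩ hadj
      have hxA : x ∈ A := by
        rcases hx1 with h | h
        · exact h
        · exfalso
          rcases h with rfl | rfl | rfl
          · exact hx2 hb₁
          · exact hx2 hb₂
          · exact hx2 hb₃
      have hyb : y ∉ ({b₁, b₂, b₃} : Set V) := fun hh => hy2 (Or.inr hh)
      have hmem : s(x, y) ∈ cutEdges G A Aᶜ := ⟨x, y, hxA, hy1, hadj, rfl⟩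
      rw [hcut] at hmem
      rcases hmem with h | h | h
      · rw [ht₁, Sym2.eq_iff] at h
        rcases h with ⟨-, h⟩ | ⟨h, -⟩
        · exact hyb (by rw [h]; simp)
        · exact hb₁ (h ▸ hxA)
      · rw [ht₂, Sym2.eq_iff] at h
        rcases h with ⟨-, h⟩ | ⟨h, -⟩
        · exact hyb (by rw [h]; simp)
        · exact hb₂ (h ▸ hxA)
      · replace h : s(x, y) = t₃ := h
        rw [ht₃, Sym2.eq_iff] at h
        rcases h with ⟨-, h⟩ | ⟨h, -⟩
        · exact hyb (by rw [h]; simp)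
        · exact hb₃ (h ▸ hxA)
    · rw [hCD]
      rw [Set.ncard_insert_of_notMem (by simp [hb12, hb13]) (Set.toFinite _),
        Set.ncard_insert_of_notMem (by simp [hb23]) (Set.toFinite _), Set.ncard_singleton]
  rcases hi4.2 C D hsep with hclaw | hclaw
  · refine claw_aux C hclaw a₁ a₂ (Or.inl ha₁) (Or.inl ha₂) ha12 ?_ ?_
    · refine le_trans h2a₁ (Set.ncard_le_ncard ?_ (Set.toFinite _))
      rintro w ⟨hw1, hw2⟩
      exact ⟨Or.inl hw2, hw1⟩
    · refine le_trans h2a₂ (Set.ncard_le_ncard ?_ (Set.toFinite _))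
      rintro w ⟨hw1, hw2⟩
      exact ⟨Or.inl hw2, hw1⟩
  · refine claw_aux D hclaw b₁ b₂ hb₁ hb₂ hb12 ?_ ?_
    · refine le_trans h2b₁ (Set.ncard_le_ncard ?_ (Set.toFinite _))
      rintro w ⟨hw1, hw2⟩
      exact ⟨hw2, hw1⟩
    · refine le_trans h2b₂ (Set.ncard_le_ncard ?_ (Set.toFinite _))
      rintro w ⟨hw1, hw2⟩
      exact ⟨hw2, hw1⟩


set_option maxHeartbeats 2000000 in
lemma main_reach (hreg : Regular G 3) (hi4 : InternallyFourConnected G)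
    (T : Set (Sym2 V)) (hT : T.ncard ≤ 3) (a c : V)
    (ha : ∃ b, G.Adj a b ∧ s(a, b) ∉ T) (hc : ∃ d, G.Adj c d ∧ s(c, d) ∉ T) :
    (G.deleteEdges T).Reachable a c := by
  by_contra hn
  set H := G.deleteEdges T with hH
  have h3ec : ∀ X : Set V, X.Nonempty → Xᶜ.Nonempty → 3 ≤ (cutEdges G X Xᶜ).ncard :=
    fun X hX hXc => three_edge_conn hreg hi4.1 X hX hXc
  set A := {x | H.Reachable a x} with hA
  set B := {x | H.Reachable c x} with hB
  have haA : a ∈ A := Reachable.refl a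
  have hcB : c ∈ B := Reachable.refl c
  have hdisj : ∀ x, x ∈ A → x ∈ B → False := fun x hx hy => hn (Reachable.trans hx hy.symm)
  have hclosA : ∀ x y, x ∈ A → H.Adj x y → y ∈ A :=
    fun x y hx h => Reachable.trans hx h.reachable
  have hclosB : ∀ x y, x ∈ B → H.Adj x y → y ∈ B :=
    fun x y hx h => Reachable.trans hx h.reachable
  have hcutsub : ∀ P : Set V, (∀ x y, x ∈ P → H.Adj x y → y ∈ P) → cutEdges G P Pᶜ ⊆ T := by
    rintro P hclos e ⟨p, q, hp, hq, hadj, rfl⟩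
    by_contra hT'
    exact hq (hclos p q hp (by rw [hH, SimpleGraph.deleteEdges_adj]; exact ⟨hadj, hT'⟩))
  have hcA : c ∈ Aᶜ := fun hh => hn hh
  have haB : a ∈ Bᶜ := fun hh => hn hh.symm
  have hcutA : cutEdges G A Aᶜ = T :=
    Set.eq_of_subset_of_ncard_le (hcutsub A hclosA)
      (le_trans hT (h3ec A ⟨a, haA⟩ ⟨c, hcA⟩)) (Set.toFinite _)
  have hcutB : cutEdges G B Bᶜ = T :=
    Set.eq_of_subset_of_ncard_le (hcutsub B hclosB)
      (le_trans hT (h3ec B ⟨c, hcB⟩ ⟨a, haB⟩)) (Set.toFinite _)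
  have hT3 : T.ncard = 3 :=
    le_antisymm hT (hcutA ▸ h3ec A ⟨a, haA⟩ ⟨c, hcA⟩)
  obtain ⟨t₁, t₂, t₃, h12, h13, h23, hTeq⟩ := Set.ncard_eq_three.1 hT3
  have reconcile : ∀ t ∈ T, ∃ p q, p ∈ A ∧ q ∈ B ∧ G.Adj p q ∧ t = s(p, q) := by
    intro t ht
    obtain ⟨p, q, hp, hq, hadj, rfl⟩ : t ∈ cutEdges G A Aᶜ := hcutA ▸ ht
    obtain ⟨u, w, hu, hw, hadj2, heq⟩ : s(p, q) ∈ cutEdges G B Bᶜ := hcutB ▸ ht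
    rw [Sym2.eq_iff] at heq
    rcases heq with ⟨h1, -⟩ | ⟨h1, h2⟩
    · exact absurd hu (fun hh => hdisj p hp (h1 ▸ hh))
    · exact ⟨p, q, hp, h2 ▸ hu, hadj, rfl⟩
  have ht₁T : t₁ ∈ T := by rw [hTeq]; simp
  have ht₂T : t₂ ∈ T := by rw [hTeq]; simp
  have ht₃T : t₃ ∈ T := by rw [hTeq]; simp
  obtain ⟨a₁, b₁, ha₁, hb₁B, hadj₁, ht₁⟩ := reconcile t₁ ht₁T
  obtain ⟨a₂, b₂, ha₂, hb₂B, hadj₂, ht₂⟩ := reconcile t₂ ht₂T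
  obtain ⟨a₃, b₃, ha₃, hb₃B, hadj₃, ht₃⟩ := reconcile t₃ ht₃T
  have hb₁A : b₁ ∈ Aᶜ := fun hh => hdisj b₁ hh hb₁B
  have hb₂A : b₂ ∈ Aᶜ := fun hh => hdisj b₂ hh hb₂B
  have hb₃A : b₃ ∈ Aᶜ := fun hh => hdisj b₃ hh hb₃B
  -- A ∪ B = univ
  have huniv : ∀ z : V, z ∈ A ∪ B := by
    intro z
    by_contra hz
    rw [Set.mem_union, not_or] at hz
    set Cz := {x | H.Reachable z x} with hCz
    have hclosC : ∀ x y, x ∈ Cz → H.Adj x y → y ∈ Cz :=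
      fun x y hx h => Reachable.trans hx h.reachable
    have hzC : z ∈ Cz := Reachable.refl z
    have haC : a ∈ Czᶜ := fun hh => hz.1 ((hh : H.Reachable z a).symm.trans (Reachable.refl z) |>.trans (Reachable.refl z)) 
    have hcutC : cutEdges G Cz Czᶜ = T :=
      Set.eq_of_subset_of_ncard_le (hcutsub Cz hclosC)
        (le_trans hT (h3ec Cz ⟨z, hzC⟩ ⟨a, haC⟩)) (Set.toFinite _)
    obtain ⟨p, q, hp, hq, hadj', heq⟩ : t₁ ∈ cutEdges G Cz Czᶜ := hcutC ▸ ht₁T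
    rw [ht₁, Sym2.eq_iff] at heq
    rcases heq with ⟨h1, -⟩ | ⟨-, h2⟩
    · have hza : H.Reachable z a₁ := by rw [h1]; exact hp
      exact hz.1 ((ha₁ : H.Reachable a a₁).trans hza.symm)
    · have hzb : H.Reachable z b₁ := by rw [h2]; exact hp
      exact hz.2 ((hb₁B : H.Reachable c b₁).trans hzb.symm)
  have hnbrA : ∀ v ∈ A, ∃ w ∈ A, G.Adj v w := by
    intro v hv
    obtain ⟨b0, hb0, hb0T⟩ := ha
    have hb0' : H.Adj a b0 := by rw [hH, SimpleGraph.deleteEdges_adj]; exact ⟨hb0, hb0T⟩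
    have hv2 : H.Reachable a v := hv
    obtain ⟨p⟩ := hv2
    obtain ⟨w, hw⟩ := walk_end_nbr p ⟨b0, hb0'⟩
    refine ⟨w, hclosA v w hv hw, ?_⟩
    rw [hH, SimpleGraph.deleteEdges_adj] at hw
    exact hw.1
  have hnbrB : ∀ v ∈ B, ∃ w ∈ B, G.Adj v w := by
    intro v hv
    obtain ⟨d0, hd0, hd0T⟩ := hc
    have hd0' : H.Adj c d0 := by rw [hH, SimpleGraph.deleteEdges_adj]; exact ⟨hd0, hd0T⟩
    have hv2 : H.Reachable c v := hv
    obtain ⟨p⟩ := hv2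
    obtain ⟨w, hw⟩ := walk_end_nbr p ⟨d0, hd0'⟩
    refine ⟨w, hclosB v w hv hw, ?_⟩
    rw [hH, SimpleGraph.deleteEdges_adj] at hw
    exact hw.1
  have hcutAset : cutEdges G A Aᶜ = {t₁, t₂, t₃} := hcutA.trans hTeq
  have hcutBset : cutEdges G B Bᶜ = {t₁, t₂, t₃} := hcutB.trans hTeq
  -- non-matching cases
  have nomatchF : ∀ (u₁ u₂ u₃ : Sym2 V), u₁ ≠ u₂ →
      cutEdges G A Aᶜ = {u₁, u₂, u₃} → cutEdges G B Bᶜ = {u₁, u₂, u₃} →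
      ∀ v, v ∈ u₁ → v ∈ u₂ → False := by
    intro u₁ u₂ u₃ hne hcA' hcB' v hv1 hv2
    rcases huniv v with hv | hv
    · exact nonmatch_aux hreg h3ec A u₁ u₂ u₃ hne hcA' v hv hv1 hv2 (hnbrA v hv)
    · exact nonmatch_aux hreg h3ec B u₁ u₂ u₃ hne hcB' v hv hv1 hv2 (hnbrB v hv)
  have perm132A : cutEdges G A Aᶜ = {t₁, t₃, t₂} := by
    rw [hcutAset]; ext x; simp only [Set.mem_insert_iff, Set.mem_singleton_iff]; tauto
  have perm132B : cutEdges G B Bᶜ = {t₁, t₃, t₂} := by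
    rw [hcutBset]; ext x; simp only [Set.mem_insert_iff, Set.mem_singleton_iff]; tauto
  have perm231A : cutEdges G A Aᶜ = {t₂, t₃, t₁} := by
    rw [hcutAset]; ext x; simp only [Set.mem_insert_iff, Set.mem_singleton_iff]; tauto
  have perm231B : cutEdges G B Bᶜ = {t₂, t₃, t₁} := by
    rw [hcutBset]; ext x; simp only [Set.mem_insert_iff, Set.mem_singleton_iff]; tauto
  have perm213A : cutEdges G A Aᶜ = {t₂, t₁, t₃} := by
    rw [hcutAset]; ext x; simp only [Set.mem_insert_iff, Set.mem_singleton_iff]; tauto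
  have perm312A : cutEdges G A Aᶜ = {t₃, t₁, t₂} := by
    rw [hcutAset]; ext x; simp only [Set.mem_insert_iff, Set.mem_singleton_iff]; tauto
  have hm12 : ∀ v, v ∈ t₁ → v ∈ t₂ → False := nomatchF t₁ t₂ t₃ h12 hcutAset hcutBset
  have hm13 : ∀ v, v ∈ t₁ → v ∈ t₃ → False := nomatchF t₁ t₃ t₂ h13 perm132A perm132B
  have hm23 : ∀ v, v ∈ t₂ → v ∈ t₃ → False := nomatchF t₂ t₃ t₁ h23 perm231A perm231B
  -- distinctness
  have ha12 : a₁ ≠ a₂ := fun h =>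
    hm12 a₁ (ht₁ ▸ Sym2.mem_mk_left _ _) (h ▸ ht₂ ▸ Sym2.mem_mk_left a₂ b₂)
  have ha13 : a₁ ≠ a₃ := fun h =>
    hm13 a₁ (ht₁ ▸ Sym2.mem_mk_left _ _) (h ▸ ht₃ ▸ Sym2.mem_mk_left a₃ b₃)
  have ha23 : a₂ ≠ a₃ := fun h =>
    hm23 a₂ (ht₂ ▸ Sym2.mem_mk_left _ _) (h ▸ ht₃ ▸ Sym2.mem_mk_left a₃ b₃)
  have hb12 : b₁ ≠ b₂ := fun h =>
    hm12 b₁ (ht₁ ▸ Sym2.mem_mk_right _ _) (h ▸ ht₂ ▸ Sym2.mem_mk_right a₂ b₂)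
  have hb13 : b₁ ≠ b₃ := fun h =>
    hm13 b₁ (ht₁ ▸ Sym2.mem_mk_right _ _) (h ▸ ht₃ ▸ Sym2.mem_mk_right a₃ b₃)
  have hb23 : b₂ ≠ b₃ := fun h =>
    hm23 b₂ (ht₂ ▸ Sym2.mem_mk_right _ _) (h ▸ ht₃ ▸ Sym2.mem_mk_right a₃ b₃)
  -- swapped cut data for the complement side
  have hcutAcset : cutEdges G Aᶜ Aᶜᶜ = {t₁, t₂, t₃} := by
    rw [compl_compl, cut_symm]; exact hcutAset
  have ht₁' : t₁ = s(b₁, a₁) := ht₁.trans (Sym2.eq_swap)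
  have ht₂' : t₂ = s(b₂, a₂) := ht₂.trans (Sym2.eq_swap)
  have ht₃' : t₃ = s(b₃, a₃) := ht₃.trans (Sym2.eq_swap)
  have ha₁c : a₁ ∈ Aᶜᶜ := by simpa using ha₁
  have ha₂c : a₂ ∈ Aᶜᶜ := by simpa using ha₂
  have ha₃c : a₃ ∈ Aᶜᶜ := by simpa using ha₃
  -- degree facts
  have h2a₁ : 2 ≤ (G.neighborSet a₁ ∩ A).ncard :=
    two_side hreg A t₁ t₂ t₃ a₁ a₂ a₃ b₁ b₂ b₃ hcutAset ht₁ ht₂ ht₃ ha₁ hb₁A hb₂A hb₃A ha12 ha13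
  have h2a₂ : 2 ≤ (G.neighborSet a₂ ∩ A).ncard :=
    two_side hreg A t₂ t₁ t₃ a₂ a₁ a₃ b₂ b₁ b₃ perm213A ht₂ ht₁ ht₃ ha₂ hb₂A hb₁A hb₃A
      ha12.symm ha23
  have h2a₃ : 2 ≤ (G.neighborSet a₃ ∩ A).ncard :=
    two_side hreg A t₃ t₁ t₂ a₃ a₁ a₂ b₃ b₁ b₂ perm312A ht₃ ht₁ ht₂ ha₃ hb₃A hb₁A hb₂A
      ha13.symm ha23.symm
  have h2b₁ : 2 ≤ (G.neighborSet b₁ ∩ Aᶜ).ncard :=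
    two_side hreg Aᶜ t₁ t₂ t₃ b₁ b₂ b₃ a₁ a₂ a₃ hcutAcset ht₁' ht₂' ht₃' hb₁A ha₁c ha₂c ha₃c
      hb12 hb13
  have perm213Ac : cutEdges G Aᶜ Aᶜᶜ = {t₂, t₁, t₃} := by
    rw [hcutAcset]; ext x; simp only [Set.mem_insert_iff, Set.mem_singleton_iff]; tauto
  have perm312Ac : cutEdges G Aᶜ Aᶜᶜ = {t₃, t₁, t₂} := by
    rw [hcutAcset]; ext x; simp only [Set.mem_insert_iff, Set.mem_singleton_iff]; tauto
  have h2b₂ : 2 ≤ (G.neighborSet b₂ ∩ Aᶜ).ncard :=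
    two_side hreg Aᶜ t₂ t₁ t₃ b₂ b₁ b₃ a₂ a₁ a₃ perm213Ac ht₂' ht₁' ht₃' hb₂A ha₂c ha₁c ha₃c
      hb12.symm hb23
  have h2b₃ : 2 ≤ (G.neighborSet b₃ ∩ Aᶜ).ncard :=
    two_side hreg Aᶜ t₃ t₁ t₂ b₃ b₁ b₂ a₃ a₁ a₂ perm312Ac ht₃' ht₁' ht₂' hb₃A ha₃c ha₁c ha₂c
      hb13.symm hb23.symm
  -- main dichotomy
  by_cases hBbig : (Aᶜ \ {b₁, b₂, b₃}).Nonempty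
  · exact match_side_aux hi4 A t₁ t₂ t₃ a₁ a₂ a₃ b₁ b₂ b₃ hcutAset ht₁ ht₂ ht₃ ha₁ ha₂ ha₃
      hb₁A hb₂A hb₃A hb12 hb13 hb23 ha12 h2a₁ h2a₂ h2b₁ h2b₂ hBbig
  by_cases hAbig : (A \ {a₁, a₂, a₃}).Nonempty
  · refine match_side_aux hi4 Aᶜ t₁ t₂ t₃ b₁ b₂ b₃ a₁ a₂ a₃ hcutAcset ht₁' ht₂' ht₃'
      hb₁A hb₂A hb₃A ha₁c ha₂c ha₃c ha12 ha13 ha23 hb12 h2b₁ h2b₂ ?_ ?_ ?_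
    · rw [compl_compl]; exact h2a₁
    · rw [compl_compl]; exact h2a₂
    · rwa [compl_compl]
  -- prism case
  rw [Set.not_nonempty_iff_eq_empty, Set.diff_eq_empty] at hBbig hAbig
  have hAeq : A = {a₁, a₂, a₃} := Set.Subset.antisymm hAbig (by
    rintro x (rfl | rfl | rfl) <;> assumption)
  have hAceq : Aᶜ = {b₁, b₂, b₃} := Set.Subset.antisymm hBbig (by
    rintro x (rfl | rfl | rfl) <;> assumption)
  -- adjacency inside the triangles
  have hnsa₁ : G.neighborSet a₁ ∩ A = {a₂, a₃} := by
    refine Set.eq_of_subset_of_ncard_le ?_ (by rw [Set.ncard_pair ha23]; exact h2a₁) (Set.toFinite _)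
    · rintro x ⟨hx1, hx2⟩
      have hxne : x ≠ a₁ := fun hh => G.loopless.irrefl a₁ (hh ▸ hx1)
      rw [hAeq] at hx2
      rcases hx2 with h | h | h
      · exact absurd h hxne
      · simp [h]
      · simp [h]
  have hnsa₂ : G.neighborSet a₂ ∩ A = {a₁, a₃} := by
    refine Set.eq_of_subset_of_ncard_le ?_ (by rw [Set.ncard_pair ha13]; exact h2a₂) (Set.toFinite _)
    · rintro x ⟨hx1, hx2⟩
      have hxne : x ≠ a₂ := fun hh => G.loopless.irrefl a₂ (hh ▸ hx1)
      rw [hAeq] at hx2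
      rcases hx2 with h | h | h
      · simp [h]
      · exact absurd h hxne
      · simp [h]
  have hnsb₁ : G.neighborSet b₁ ∩ Aᶜ = {b₂, b₃} := by
    refine Set.eq_of_subset_of_ncard_le ?_ (by rw [Set.ncard_pair hb23]; exact h2b₁) (Set.toFinite _)
    · rintro x ⟨hx1, hx2⟩
      have hxne : x ≠ b₁ := fun hh => G.loopless.irrefl b₁ (hh ▸ hx1)
      rw [hAceq] at hx2
      rcases hx2 with h | h | h
      · exact absurd h hxne
      · simp [h]
      · simp [h]
  have hnsb₂ : G.neighborSet b₂ ∩ Aᶜ = {b₁, b₃} := by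
    refine Set.eq_of_subset_of_ncard_le ?_ (by rw [Set.ncard_pair hb13]; exact h2b₂) (Set.toFinite _)
    · rintro x ⟨hx1, hx2⟩
      have hxne : x ≠ b₂ := fun hh => G.loopless.irrefl b₂ (hh ▸ hx1)
      rw [hAceq] at hx2
      rcases hx2 with h | h | h
      · simp [h]
      · exact absurd h hxne
      · simp [h]
  have hadj12 : G.Adj a₁ a₂ := by
    have : a₂ ∈ G.neighborSet a₁ ∩ A := by rw [hnsa₁]; simp
    exact this.1
  have hadj13 : G.Adj a₁ a₃ := by
    have : a₃ ∈ G.neighborSet a₁ ∩ A := by rw [hnsa₁]; simp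
    exact this.1
  have hadj23 : G.Adj a₂ a₃ := by
    have : a₃ ∈ G.neighborSet a₂ ∩ A := by rw [hnsa₂]; simp
    exact this.1
  have hbadj12 : G.Adj b₁ b₂ := by
    have : b₂ ∈ G.neighborSet b₁ ∩ Aᶜ := by rw [hnsb₁]; simp
    exact this.1
  have hbadj13 : G.Adj b₁ b₃ := by
    have : b₃ ∈ G.neighborSet b₁ ∩ Aᶜ := by rw [hnsb₁]; simp
    exact this.1
  have hbadj23 : G.Adj b₂ b₃ := by
    have : b₃ ∈ G.neighborSet b₂ ∩ Aᶜ := by rw [hnsb₂]; simp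
    exact this.1
  -- cross edges only along the matching
  have hcross : ∀ x ∈ A, ∀ y ∈ Aᶜ, G.Adj x y →
      (x = a₁ ∧ y = b₁) ∨ (x = a₂ ∧ y = b₂) ∨ (x = a₃ ∧ y = b₃) := by
    intro x hx y hy hadj
    have hmem : s(x, y) ∈ cutEdges G A Aᶜ := ⟨x, y, hx, hy, hadj, rfl⟩
    rw [hcutAset] at hmem
    rcases hmem with h | h | h
    · rw [ht₁, Sym2.eq_iff] at h
      rcases h with ⟨h1, h2⟩ | ⟨h1, h2⟩
      · exact Or.inl ⟨h1, h2⟩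
      · exact absurd (h1 ▸ hx) hb₁A
    · rw [ht₂, Sym2.eq_iff] at h
      rcases h with ⟨h1, h2⟩ | ⟨h1, h2⟩
      · exact Or.inr (Or.inl ⟨h1, h2⟩)
      · exact absurd (h1 ▸ hx) hb₂A
    · replace h : s(x, y) = t₃ := h
      rw [ht₃, Sym2.eq_iff] at h
      rcases h with ⟨h1, h2⟩ | ⟨h1, h2⟩
      · exact Or.inr (Or.inr ⟨h1, h2⟩)
      · exact absurd (h1 ▸ hx) hb₃A
  -- sides are distinct vertices
  have hab : ∀ i ∈ A, ∀ j ∈ Aᶜ, i ≠ j := fun i hi j hj hh => hj (hh ▸ hi)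
  have ha1b1 := hab a₁ ha₁ b₁ hb₁A
  have ha1b2 := hab a₁ ha₁ b₂ hb₂A
  have ha1b3 := hab a₁ ha₁ b₃ hb₃A
  have ha2b1 := hab a₂ ha₂ b₁ hb₁A
  have ha2b2 := hab a₂ ha₂ b₂ hb₂A
  have ha2b3 := hab a₂ ha₂ b₃ hb₃A
  have ha3b1 := hab a₃ ha₃ b₁ hb₁A
  have ha3b2 := hab a₃ ha₃ b₂ hb₂A
  have ha3b3 := hab a₃ ha₃ b₃ hb₃A
  -- the separation
  set C : Set V := {a₁, a₂, a₃, b₂, b₃} with hCdef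
  set D : Set V := {a₁, b₁, b₂, b₃} with hDdef
  have hCD : C ∩ D = {a₁, b₂, b₃} := by
    ext x
    simp only [hCdef, hDdef, Set.mem_inter_iff, Set.mem_insert_iff, Set.mem_singleton_iff]
    constructor
    · rintro ⟨h1 | h1 | h1 | h1 | h1, h2⟩
      · exact Or.inl h1
      · subst h1
        rcases h2 with h | h | h | h
        · exact absurd h ha12.symm
        · exact absurd h ha2b1
        · exact absurd h ha2b2
        · exact absurd h ha2b3
      · subst h1
        rcases h2 with h | h | h | h
        · exact absurd h ha13.symm
        · exact absurd h ha3b1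
        · exact absurd h ha3b2
        · exact absurd h ha3b3
      · exact Or.inr (Or.inl h1)
      · exact Or.inr (Or.inr h1)
    · rintro (rfl | rfl | rfl)
      · exact ⟨Or.inl rfl, Or.inl rfl⟩
      · exact ⟨Or.inr (Or.inr (Or.inr (Or.inl rfl))), Or.inr (Or.inr (Or.inl rfl))⟩
      · exact ⟨Or.inr (Or.inr (Or.inr (Or.inr rfl))), Or.inr (Or.inr (Or.inr rfl))⟩
  have hsep : IsSep G 3 C D := by
    refine ⟨?_, ⟨a₂, ?_, ?_⟩, ⟨b₁, ?_, ?_⟩, ?_, ?_⟩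
    · apply Set.eq_univ_of_univ_subset
      intro x _
      rcases huniv x with hx | hx
      · rw [hAeq] at hx
        rcases hx with rfl | rfl | rfl
        · exact Or.inl (Or.inl rfl)
        · exact Or.inl (Or.inr (Or.inl rfl))
        · exact Or.inl (Or.inr (Or.inr (Or.inl rfl)))
      · have hx' : x ∈ Aᶜ := fun hh => hdisj x hh hx
        rw [hAceq] at hx'
        rcases hx' with rfl | rfl | rfl
        · exact Or.inr (Or.inr (Or.inl rfl))
        · exact Or.inl (Or.inr (Or.inr (Or.inr (Or.inl rfl))))
        · exact Or.inl (Or.inr (Or.inr (Or.inr (Or.inr rfl))))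
    · exact Or.inr (Or.inl rfl)
    · rintro (h | h | h | h)
      · exact ha12 h.symm
      · exact ha2b1 h
      · exact ha2b2 h
      · exact ha2b3 h
    · exact Or.inr (Or.inl rfl)
    · rintro (h | h | h | h | h)
      · exact ha1b1 h.symm
      · exact ha2b1 h.symm
      · exact ha3b1 h.symm
      · exact hb12 h
      · exact hb13 h
    · rintro x ⟨hx1, hx2⟩ y ⟨hy1, hy2⟩ hadj
      -- x ∈ {a₂, a₃}, y = b₁
      have hxA : x = a₂ ∨ x = a₃ := by
        rcases hx1 with h | h | h | h | h
        · exact absurd (Or.inl h) hx2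
        · exact Or.inl h
        · exact Or.inr h
        · exact absurd (Or.inr (Or.inr (Or.inl h))) hx2
        · exact absurd (Or.inr (Or.inr (Or.inr h))) hx2
      have hyb : y = b₁ := by
        rcases hy1 with h | h | h | h
        · exact absurd (Or.inl h) hy2
        · exact h
        · exact absurd (Or.inr (Or.inr (Or.inr (Or.inl h)))) hy2
        · exact absurd (Or.inr (Or.inr (Or.inr (Or.inr h)))) hy2
      rw [hyb] at hadj
      rcases hxA with rfl | rfl
      · rcases hcross x (by rw [hAeq]; simp) b₁ hb₁A hadj with ⟨h, -⟩ | ⟨-, h⟩ | ⟨h, -⟩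
        · exact ha12 h.symm
        · exact hb12 h
        · exact ha23 h
      · rcases hcross x (by rw [hAeq]; simp) b₁ hb₁A hadj with ⟨h, -⟩ | ⟨h, -⟩ | ⟨-, h⟩
        · exact ha13 h.symm
        · exact ha23 h.symm
        · exact hb13 h
    · rw [hCD]
      rw [Set.ncard_insert_of_notMem (by simp [ha1b2, ha1b3]) (Set.toFinite _),
        Set.ncard_insert_of_notMem (by simp [hb23]) (Set.toFinite _), Set.ncard_singleton]
  rcases hi4.2 C D hsep with hclaw | hclaw
  · refine claw_aux C hclaw a₁ a₂ (by simp [hCdef]) (by simp [hCdef]) ha12 ?_ ?_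
    · have hsub : ({a₂, a₃} : Set V) ⊆ {w | w ∈ C ∧ G.Adj a₁ w} := by
        rintro x (rfl | rfl)
        · exact ⟨by simp [hCdef], hadj12⟩
        · exact ⟨by simp [hCdef], hadj13⟩
      have := Set.ncard_le_ncard hsub (Set.toFinite _)
      rw [Set.ncard_pair ha23] at this
      exact this
    · have hsub : ({a₁, a₃} : Set V) ⊆ {w | w ∈ C ∧ G.Adj a₂ w} := by
        rintro x (rfl | rfl)
        · exact ⟨by simp [hCdef], hadj12.symm⟩
        · exact ⟨by simp [hCdef], hadj23⟩
      have := Set.ncard_le_ncard hsub (Set.toFinite _)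
      rw [Set.ncard_pair ha13] at this
      exact this
  · refine claw_aux D hclaw b₁ b₂ (by simp [hDdef]) (by simp [hDdef]) hb12 ?_ ?_
    · have hsub : ({b₂, b₃} : Set V) ⊆ {w | w ∈ D ∧ G.Adj b₁ w} := by
        rintro x (rfl | rfl)
        · exact ⟨by simp [hDdef], hbadj12⟩
        · exact ⟨by simp [hDdef], hbadj13⟩
      have := Set.ncard_le_ncard hsub (Set.toFinite _)
      rw [Set.ncard_pair hb23] at this
      exact this
    · have hsub : ({b₁, b₃} : Set V) ⊆ {w | w ∈ D ∧ G.Adj b₂ w} := by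
        rintro x (rfl | rfl)
        · exact ⟨by simp [hDdef], hbadj12.symm⟩
        · exact ⟨by simp [hDdef], hbadj23⟩
      have := Set.ncard_le_ncard hsub (Set.toFinite _)
      rw [Set.ncard_pair hb13] at this
      exact this


lemma edge_count (hreg : Regular G 3) (hV : 3 < Nat.card V) :
    6 ≤ G.edgeSet.ncard := by
  classical
  have hdeg : ∀ v : V, G.degree v = 3 := by
    intro v
    rw [← hreg v]
    rw [← SimpleGraph.card_neighborSet_eq_degree]
    rw [← Nat.card_coe_set_eq, Nat.card_eq_fintype_card]
  have hsum := SimpleGraph.sum_degrees_eq_twice_card_edges G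
  simp only [hdeg, Finset.sum_const, smul_eq_mul, Finset.card_univ] at hsum
  have hVc : 4 ≤ Fintype.card V := by rwa [Nat.card_eq_fintype_card] at hV
  have hE : G.edgeSet.ncard = G.edgeFinset.card := by
    rw [Set.ncard_eq_toFinset_card']
    congr
  omega

end Helpers


open VTpaper in
/-- The line graph of a 3-regular internally-4-connected graph is
4-connected. -/
theorem stmt_9 {V : Type*} [Fintype V] (G : SimpleGraph V)
    (hreg : Regular G 3) (hi4 : InternallyFourConnected G) :
    KConnected 4 (LineGraph G) := by
  classical
  have hV4 : 3 < Nat.card V := hi4.1.1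
  have hE6 : 6 ≤ G.edgeSet.ncard := edge_count hreg hV4
  constructor
  · rw [Nat.card_coe_set_eq]
    omega
  · intro S hSfin hS
    set T : Set (Sym2 V) := Subtype.val '' S with hTdef
    have hT : T.ncard ≤ 3 := by
      rw [hTdef, Set.ncard_image_of_injective _ Subtype.val_injective]
      omega
    have hSne : S ≠ Set.univ := by
      intro hh
      rw [hh, Set.ncard_univ, Nat.card_coe_set_eq] at hS
      omega
    obtain ⟨e₀, he₀⟩ := (Set.ne_univ_iff_exists_notMem S).1 hSne
    have hgetrep : ∀ e : ↥G.edgeSet, e ∈ Sᶜ →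
        ∃ a b, G.Adj a b ∧ (e : Sym2 V) = s(a, b) ∧ s(a, b) ∉ T := by
      intro e he
      obtain ⟨a, b, hab⟩ : ∃ a b, (e : Sym2 V) = s(a, b) :=
        Sym2.inductionOn (e : Sym2 V) (fun x y => ⟨x, y, rfl⟩)
      refine ⟨a, b, (G.mem_edgeSet).1 (hab ▸ e.2), hab, ?_⟩
      rintro ⟨e', he'S, he'v⟩
      rw [← hab] at he'v
      exact he (Subtype.val_injective he'v ▸ he'S)
    refine { preconnected := ?_, nonempty := ⟨⟨e₀, he₀⟩⟩ }
    rintro ⟨e, he⟩ ⟨f, hf⟩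
    obtain ⟨a, b, hadjab, habe, habT⟩ := hgetrep e he
    obtain ⟨c, d, hadjcd, hcdf, hcdT⟩ := hgetrep f hf
    have hreach := main_reach hreg hi4 T hT a c ⟨b, hadjab, habT⟩ ⟨d, hadjcd, hcdT⟩
    obtain ⟨w⟩ := hreach
    exact line_reach_walk hTdef w e he (by rw [habe]; exact Sym2.mem_mk_left _ _)
      f hf (by rw [hcdf]; exact Sym2.mem_mk_left _ _)
end
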